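/- arXiv:1501.00674 — 9 statements merged into one kernel-verified Lean document; each statement's English description precedes it below -/
import Mathlib

section
/- Let λ > 1 and let f : ℝ → ℝ be such that for all x, y ∈ ℝ with ⌊x + 1/2⌋ = ⌊y + 1/2⌋ (i.e., x and y lie in the same interval I_k = [k − 1/2, k + 1/2)), one has |f(x) − f(y)| ≥ λ|x − y|. If x₀, y₀ ∈ ℝ are such that the iterates satisfy ⌊f^[n](x₀) + 1/2⌋ = ⌊f^[n](y₀) + 1/2⌋ for every n ≥ 0 (the two trajectories have the same route), then x₀ = y₀. -/
/-- If `f` stretches by a factor `λ > 1` any two points lying in the same interval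
`I_k = [k - 1/2, k + 1/2)` (equivalently, having equal nearest integer `⌊· + 1/2⌋`), then
two trajectories having the same route must start at the same point. -/
theorem trajectory_unique_of_same_route (lam : ℝ) (hlam : 1 < lam) (f : ℝ → ℝ)
    (hstretch : ∀ x y : ℝ, ⌊x + 1/2⌋ = ⌊y + 1/2⌋ → |f x - f y| ≥ lam * |x - y|)
    (x₀ y₀ : ℝ)
    (hroute : ∀ n : ℕ, ⌊f^[n] x₀ + 1/2⌋ = ⌊f^[n] y₀ + 1/2⌋) :
    x₀ = y₀ := by
  -- growth of the difference
  have hgrow : ∀ n : ℕ, |f^[n] x₀ - f^[n] y₀| ≥ lam ^ n * |x₀ - y₀| := by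
    intro n
    induction n with
    | zero => simp
    | succ n ih =>
      have h1 := hstretch _ _ (hroute n)
      have h2 : lam * (lam ^ n * |x₀ - y₀|) ≤ lam * |f^[n] x₀ - f^[n] y₀| :=
        mul_le_mul_of_nonneg_left ih (by linarith)
      calc lam ^ (n+1) * |x₀ - y₀| = lam * (lam ^ n * |x₀ - y₀|) := by ring
        _ ≤ lam * |f^[n] x₀ - f^[n] y₀| := h2
        _ ≤ |f (f^[n] x₀) - f (f^[n] y₀)| := h1
        _ = |f^[n+1] x₀ - f^[n+1] y₀| := by
            rw [Function.iterate_succ_apply', Function.iterate_succ_apply']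
  -- same-floor points are within distance 1
  have hbound : ∀ n : ℕ, |f^[n] x₀ - f^[n] y₀| < 1 := by
    intro n
    have h := hroute n
    have ha := Int.sub_one_lt_floor (f^[n] x₀ + 1/2)
    have hb := Int.floor_le (f^[n] x₀ + 1/2)
    have hc := Int.sub_one_lt_floor (f^[n] y₀ + 1/2)
    have hd := Int.floor_le (f^[n] y₀ + 1/2)
    rw [h] at ha hb
    rw [abs_lt]
    constructor <;> push_cast at * <;> linarith
  by_contra hne
  have hpos : 0 < |x₀ - y₀| := abs_pos.mpr (sub_ne_zero.mpr hne)
  obtain ⟨n, hn⟩ := pow_unbounded_of_one_lt (1 / |x₀ - y₀|) hlam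
  have : lam ^ n * |x₀ - y₀| > 1 := by
    rw [gt_iff_lt, ← div_lt_iff₀ hpos] at *
    linarith [hn]
  linarith [hgrow n, hbound n]
end

section
/- Let λ > 1 and let f₀ : (−1/2, 1/2) → ℝ be continuous, strictly increasing, odd (f₀(−x) = −f₀(x)), satisfy |f₀(x) − f₀(y)| ≥ λ|x − y| for all x, y, and be unbounded: f₀(x) → +∞ as x → (1/2)⁻. Let S = ℝ \ {k − 1/2 : k ∈ ℤ} and define f : S → ℝ by f(x) = ⌊x + 1/2⌋ + f₀(x − ⌊x + 1/2⌋). Then for every sequence (m₀, m₁, m₂, …) of integers there exists a unique x₀ ∈ (m₀ − 1/2, m₀ + 1/2) such that the trajectory x_{n+1} = f(x_n) is defined for all n ≥ 0 (each x_n ∈ S) and ⌊x_n + 1/2⌋ = m_n for every n ≥ 0. In other words, the LDS generated by f possesses the Bernoulli property: every integer sequence is the route of exactly one trajectory. -/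
/-- The LDS generated (with lift 1) by a continuous, strictly increasing, odd, stretching and
unbounded map `f₀` on the open main interval `(-1/2, 1/2)` possesses the Bernoulli property:
every integer sequence is the route of exactly one trajectory. -/
theorem bernoulli_property_of_odd_increasing_stretching
    (lam : ℝ) (hlam : 1 < lam) (f₀ : ℝ → ℝ)
    (hcont : ContinuousOn f₀ (Set.Ioo (-(1/2)) (1/2)))
    (hmono : StrictMonoOn f₀ (Set.Ioo (-(1/2)) (1/2)))
    (hodd : ∀ x ∈ Set.Ioo (-(1/2) : ℝ) (1/2), f₀ (-x) = -f₀ x)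
    (hstretch : ∀ x ∈ Set.Ioo (-(1/2) : ℝ) (1/2), ∀ y ∈ Set.Ioo (-(1/2) : ℝ) (1/2),
      |f₀ x - f₀ y| ≥ lam * |x - y|)
    (hunbounded : Filter.Tendsto f₀
      (nhdsWithin (1/2) (Set.Ioo (-(1/2) : ℝ) (1/2))) Filter.atTop)
    (S : Set ℝ) (hS : S = {x : ℝ | ∀ k : ℤ, x ≠ (k : ℝ) - 1/2})
    (f : ℝ → ℝ) (hf : ∀ x : ℝ, f x = (⌊x + 1/2⌋ : ℝ) + f₀ (x - (⌊x + 1/2⌋ : ℝ))) :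
    ∀ M : ℕ → ℤ, ∃! x₀ : ℝ,
      x₀ ∈ Set.Ioo ((M 0 : ℝ) - 1/2) ((M 0 : ℝ) + 1/2) ∧
      (∀ n : ℕ, f^[n] x₀ ∈ S) ∧
      (∀ n : ℕ, ⌊f^[n] x₀ + 1/2⌋ = M n) := by
  intro M
  have hlam0 : (0:ℝ) < lam := lt_trans one_pos hlam
  have hmem0 : (0:ℝ) ∈ Set.Ioo (-(1/2):ℝ) (1/2) := by norm_num
  have hf00 : f₀ 0 = 0 := by
    have h := hodd 0 hmem0
    rw [neg_zero] at h
    linarith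
  -- surjectivity of f₀ onto ℝ
  have hsurj : ∀ y : ℝ, ∃ x ∈ Set.Ioo (-(1/2):ℝ) (1/2), f₀ x = y := by
    intro y
    haveI : (nhdsWithin (1/2 : ℝ) (Set.Ioo (-(1/2):ℝ) (1/2))).NeBot := by
      refine mem_closure_iff_nhdsWithin_neBot.mp ?_
      rw [closure_Ioo (by norm_num : (-(1/2):ℝ) ≠ 1/2)]
      constructor <;> norm_num
    obtain ⟨a, ha1, ha2⟩ := ((hunbounded.eventually (Filter.eventually_gt_atTop (|y|))).and
      eventually_mem_nhdsWithin).exists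
    have habs : (0:ℝ) ≤ |y| := abs_nonneg y
    have ha0 : 0 < a := by
      by_contra hle
      push_neg at hle
      rcases eq_or_lt_of_le hle with h | h
      · rw [h, hf00] at ha1; linarith
      · have := hmono ha2 hmem0 h
        rw [hf00] at this
        linarith
    have hna : (-a) ∈ Set.Ioo (-(1/2):ℝ) (1/2) := ⟨by linarith [ha2.2], by linarith⟩
    have hfa : f₀ (-a) = - f₀ a := hodd a ha2
    have hy1 : f₀ (-a) ≤ y := by have := neg_abs_le y; linarith
    have hy2 : y ≤ f₀ a := by have := le_abs_self y; linarith
    have hsub : Set.Icc (-a) a ⊆ Set.Ioo (-(1/2):ℝ) (1/2) := by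
      intro t ht
      exact ⟨lt_of_lt_of_le (by linarith [ha2.2]) ht.1, lt_of_le_of_lt ht.2 ha2.2⟩
    obtain ⟨x, hx, hfx⟩ := intermediate_value_Icc (by linarith : -a ≤ a)
      (hcont.mono hsub) ⟨hy1, hy2⟩
    exact ⟨x, hsub hx, hfx⟩
  -- inverse of f₀
  obtain ⟨g, hg⟩ : ∃ g : ℝ → ℝ, ∀ y, g y ∈ Set.Ioo (-(1/2):ℝ) (1/2) ∧ f₀ (g y) = y := by
    choose g h1 h2 using hsurj
    exact ⟨g, fun y => ⟨h1 y, h2 y⟩⟩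
  have hglip : ∀ a b : ℝ, |g a - g b| ≤ lam⁻¹ * |a - b| := by
    intro a b
    have h := hstretch (g a) (hg a).1 (g b) (hg b).1
    rw [(hg a).2, (hg b).2] at h
    rw [inv_mul_eq_div, le_div_iff₀ hlam0]
    linarith
  have hgmono : Monotone g := by
    intro a b hab
    by_contra hlt
    push_neg at hlt
    have h := hmono (hg b).1 (hg a).1 hlt
    rw [(hg a).2, (hg b).2] at h
    linarith
  -- floor on intervals
  have hfloor : ∀ (k : ℤ) (z : ℝ), z ∈ Set.Ioo ((k:ℝ) - 1/2) ((k:ℝ) + 1/2) →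
      ⌊z + 1/2⌋ = k := by
    intro k z hz
    rw [Int.floor_eq_iff]
    constructor
    · linarith [hz.1]
    · linarith [hz.2]
  have hIooS : ∀ (k : ℤ) (z : ℝ), z ∈ Set.Ioo ((k:ℝ) - 1/2) ((k:ℝ) + 1/2) → z ∈ S := by
    intro k z hz
    rw [hS]
    intro j hj
    rw [hj] at hz
    have h1 : (k:ℝ) < j := by linarith [hz.1]
    have h2 : (j:ℝ) < k + 1 := by linarith [hz.2]
    have h1' : k < j := by exact_mod_cast h1
    have h2' : j < k + 1 := by exact_mod_cast h2
    omega
  have hfval : ∀ (k : ℤ) (z : ℝ), z ∈ Set.Ioo ((k:ℝ) - 1/2) ((k:ℝ) + 1/2) →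
      f z = k + f₀ (z - k) := by
    intro k z hz
    rw [hf z, hfloor k z hz]
  -- inverse branches
  obtain ⟨h, hmem, hfh, hhmono, hhlip⟩ :
      ∃ h : ℤ → ℝ → ℝ,
        (∀ (k : ℤ) (y : ℝ), h k y ∈ Set.Ioo ((k:ℝ) - 1/2) ((k:ℝ) + 1/2)) ∧
        (∀ (k : ℤ) (y : ℝ), f (h k y) = y) ∧
        (∀ k : ℤ, Monotone (h k)) ∧
        (∀ (k : ℤ) (a b : ℝ), |h k a - h k b| ≤ lam⁻¹ * |a - b|) := by
    have hmem' : ∀ (k : ℤ) (y : ℝ),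
        (k:ℝ) + g (y - k) ∈ Set.Ioo ((k:ℝ) - 1/2) ((k:ℝ) + 1/2) := by
      intro k y
      have := (hg (y - k)).1
      exact ⟨by linarith [this.1], by linarith [this.2]⟩
    refine ⟨fun k y => (k:ℝ) + g (y - k), hmem', ?_, ?_, ?_⟩
    · intro k y
      rw [hfval k _ (hmem' k y)]
      have e : (k:ℝ) + g (y - k) - k = g (y - k) := by ring
      rw [e, (hg (y - k)).2]
      ring
    · intro k a b hab
      exact (add_le_add_iff_left _).mpr (hgmono (by linarith))
    · intro k a b
      have h1 := hglip (a - k) (b - k)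
      have e1 : (k:ℝ) + g (a - k) - ((k:ℝ) + g (b - k)) = g (a - k) - g (b - k) := by ring
      have e2 : (a - (k:ℝ)) - (b - (k:ℝ)) = a - b := by ring
      rw [e1]
      rw [e2] at h1
      exact h1
  -- backward orbits of increasing depth
  obtain ⟨q, hq0, hqs⟩ : ∃ q : ℕ → ℕ → ℝ, (∀ n, q 0 n = (M n : ℝ)) ∧
      (∀ d n, q (d+1) n = h (M n) (q d (n+1))) :=
    ⟨fun d => Nat.rec (motive := fun _ => ℕ → ℝ) (fun n => (M n : ℝ))
      (fun _ ih n => h (M n) (ih (n+1))) d, fun _ => rfl, fun _ _ => rfl⟩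
  have hqIcc : ∀ d n, q d n ∈ Set.Icc ((M n : ℝ) - 1/2) ((M n : ℝ) + 1/2) := by
    intro d n
    cases d with
    | zero =>
      rw [hq0]
      constructor <;> norm_num
    | succ d =>
      rw [hqs]
      exact Set.Ioo_subset_Icc_self (hmem _ _)
  have hlaminv0 : (0:ℝ) ≤ lam⁻¹ := inv_nonneg.mpr hlam0.le
  have hstep : ∀ d n, |q (d+1) n - q d n| ≤ (1/2) * lam⁻¹ ^ d := by
    intro d
    induction d with
    | zero =>
      intro n
      rw [hqs 0 n, hq0 (n+1), hq0 n, pow_zero, mul_one]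
      have hm := hmem (M n) ((M (n+1) : ℝ))
      exact abs_le.mpr ⟨by linarith [hm.1], by linarith [hm.2]⟩
    | succ d ih =>
      intro n
      rw [hqs (d+1) n, hqs d n]
      calc |h (M n) (q (d+1) (n+1)) - h (M n) (q d (n+1))|
          ≤ lam⁻¹ * |q (d+1) (n+1) - q d (n+1)| := hhlip _ _ _
        _ ≤ lam⁻¹ * ((1/2) * lam⁻¹ ^ d) :=
            mul_le_mul_of_nonneg_left (ih _) hlaminv0
        _ = (1/2) * lam⁻¹ ^ (d+1) := by ring
  have hlaminv1 : lam⁻¹ < 1 := by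
    rw [inv_lt_one_iff₀]
    right; exact hlam
  have hcauchy : ∀ n, CauchySeq (fun d => q d n) := by
    intro n
    apply cauchySeq_of_le_geometric lam⁻¹ (1/2) hlaminv1
    intro d
    rw [Real.dist_eq, abs_sub_comm]
    exact hstep d n
  have hxex : ∀ n, ∃ L, Filter.Tendsto (fun d => q d n) Filter.atTop (nhds L) := fun n =>
    cauchySeq_tendsto_of_complete (hcauchy n)
  choose x hx using hxex
  -- the limit lies strictly inside each interval
  have hxmem : ∀ n, x n ∈ Set.Ioo ((M n : ℝ) - 1/2) ((M n : ℝ) + 1/2) := by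
    intro n
    have hshift : Filter.Tendsto (fun d => q (d+1) n) Filter.atTop (nhds (x n)) :=
      (hx n).comp (Filter.tendsto_add_atTop_nat 1)
    have hmemIcc : ∀ d, q (d+1) n ∈
        Set.Icc (h (M n) ((M (n+1):ℝ) - 1/2)) (h (M n) ((M (n+1):ℝ) + 1/2)) := by
      intro d
      rw [hqs]
      have hic := hqIcc d (n+1)
      exact ⟨hhmono _ hic.1, hhmono _ hic.2⟩
    have hxIcc := isClosed_Icc.mem_of_tendsto hshift
      (Filter.Eventually.of_forall hmemIcc)
    have h1 := hmem (M n) ((M (n+1):ℝ) - 1/2)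
    have h2 := hmem (M n) ((M (n+1):ℝ) + 1/2)
    exact ⟨lt_of_lt_of_le h1.1 hxIcc.1, lt_of_le_of_lt hxIcc.2 h2.2⟩
  -- f maps each limit to the next
  have hfx : ∀ n, f (x n) = x (n+1) := by
    intro n
    have hcontAt : ContinuousAt f (x n) := by
      have hmaps : Set.MapsTo (fun z : ℝ => z - (M n : ℝ))
          (Set.Ioo ((M n:ℝ) - 1/2) ((M n:ℝ) + 1/2)) (Set.Ioo (-(1/2):ℝ) (1/2)) := by
        intro z hz
        exact ⟨by linarith [hz.1], by linarith [hz.2]⟩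
      have hco0 : ContinuousOn (fun z : ℝ => (M n : ℝ) + f₀ (z - (M n : ℝ)))
          (Set.Ioo ((M n:ℝ) - 1/2) ((M n:ℝ) + 1/2)) :=
        continuousOn_const.add
          (hcont.comp ((continuous_id.sub continuous_const).continuousOn) hmaps)
      have hco : ContinuousOn f (Set.Ioo ((M n:ℝ) - 1/2) ((M n:ℝ) + 1/2)) :=
        hco0.congr (fun z hz => hfval (M n) z hz)
      exact hco.continuousAt (isOpen_Ioo.mem_nhds (hxmem n))
    have h1 : Filter.Tendsto (fun d => f (q (d+1) n)) Filter.atTop (nhds (f (x n))) :=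
      hcontAt.tendsto.comp ((hx n).comp (Filter.tendsto_add_atTop_nat 1))
    have h2 : ∀ d, f (q (d+1) n) = q d (n+1) := by
      intro d
      rw [hqs]
      exact hfh _ _
    have h1' : Filter.Tendsto (fun d => q d (n+1)) Filter.atTop (nhds (f (x n))) :=
      (Filter.tendsto_congr h2).mp h1
    exact tendsto_nhds_unique h1' (hx (n+1))
  have hiter : ∀ n, f^[n] (x 0) = x n := by
    intro n
    induction n with
    | zero => rfl
    | succ n ih => rw [Function.iterate_succ_apply', ih, hfx]
  refine ⟨x 0, ⟨hxmem 0,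
    fun n => by rw [hiter]; exact hIooS _ _ (hxmem n),
    fun n => by rw [hiter]; exact hfloor _ _ (hxmem n)⟩, ?_⟩
  -- uniqueness
  intro y hy
  obtain ⟨hy0, hyS, hyfl⟩ := hy
  have hymem : ∀ n, f^[n] y ∈ Set.Ioo ((M n:ℝ) - 1/2) ((M n:ℝ) + 1/2) := by
    intro n
    have hfl := hyfl n
    have hS' := hyS n
    rw [hS] at hS'
    have h1 : (M n : ℝ) ≤ f^[n] y + 1/2 := by
      have := Int.floor_le (f^[n] y + 1/2)
      rw [hfl] at this
      linarith
    have h2 : f^[n] y + 1/2 < (M n : ℝ) + 1 := by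
      have := Int.lt_floor_add_one (f^[n] y + 1/2)
      rw [hfl] at this
      linarith
    have hne : f^[n] y ≠ (M n : ℝ) - 1/2 := hS' (M n)
    constructor
    · rcases lt_or_eq_of_le (by linarith : (M n:ℝ) - 1/2 ≤ f^[n] y) with hlt | heq
      · exact hlt
      · exact absurd heq.symm hne
    · linarith
  have hexp : ∀ n, lam ^ n * |x 0 - y| ≤ |f^[n] (x 0) - f^[n] y| := by
    intro n
    induction n with
    | zero => simp
    | succ n ih =>
      rw [Function.iterate_succ_apply', Function.iterate_succ_apply']
      have ha : f^[n] (x 0) ∈ Set.Ioo ((M n:ℝ) - 1/2) ((M n:ℝ) + 1/2) := by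
        rw [hiter]; exact hxmem n
      have hb := hymem n
      have ha' : f^[n] (x 0) - (M n : ℝ) ∈ Set.Ioo (-(1/2):ℝ) (1/2) :=
        ⟨by linarith [ha.1], by linarith [ha.2]⟩
      have hb' : f^[n] y - (M n : ℝ) ∈ Set.Ioo (-(1/2):ℝ) (1/2) :=
        ⟨by linarith [hb.1], by linarith [hb.2]⟩
      rw [hfval (M n) _ ha, hfval (M n) _ hb]
      have hst := hstretch _ ha' _ hb'
      have e : ((M n:ℝ) + f₀ (f^[n] (x 0) - M n)) - ((M n:ℝ) + f₀ (f^[n] y - M n))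
          = f₀ (f^[n] (x 0) - M n) - f₀ (f^[n] y - M n) := by ring
      have e2 : (f^[n] (x 0) - (M n:ℝ)) - (f^[n] y - (M n:ℝ))
          = f^[n] (x 0) - f^[n] y := by ring
      rw [e2] at hst
      rw [e]
      calc lam ^ (n+1) * |x 0 - y| = lam * (lam ^ n * |x 0 - y|) := by ring
        _ ≤ lam * |f^[n] (x 0) - f^[n] y| :=
            mul_le_mul_of_nonneg_left ih hlam0.le
        _ ≤ |f₀ (f^[n] (x 0) - M n) - f₀ (f^[n] y - M n)| := hst
  have hbound : ∀ n, lam ^ n * |x 0 - y| ≤ 1 := by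
    intro n
    have h1 := hexp n
    have ha : f^[n] (x 0) ∈ Set.Ioo ((M n:ℝ) - 1/2) ((M n:ℝ) + 1/2) := by
      rw [hiter]; exact hxmem n
    have hb := hymem n
    have h2 : |f^[n] (x 0) - f^[n] y| ≤ 1 :=
      abs_le.mpr ⟨by linarith [ha.1, hb.2], by linarith [ha.2, hb.1]⟩
    linarith
  by_contra hne
  have habs : 0 < |x 0 - y| := abs_pos.mpr (sub_ne_zero.mpr (fun h' => hne h'.symm))
  obtain ⟨n, hn⟩ := ((tendsto_pow_atTop_atTop_of_one_lt hlam).eventually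
    (Filter.eventually_gt_atTop (1 / |x 0 - y|))).exists
  rw [div_lt_iff₀ habs] at hn
  have := hbound n
  linarith
end

section
/- Let −1/2 = t₀ < t₁ < ⋯ < t_m = 1/2 and let J_{k,j} = [k + t_{j−1}, k + t_j) for k ∈ ℤ, 1 ≤ j ≤ m. Let f : ℝ → ℝ have the lift-1 property f(x + k) = f(x) + k for all k ∈ ℤ, and suppose that on each piece J_{0,j} the map f is affine with nonzero slope and maps J_{0,j} onto a half-open interval whose two endpoints each belong to ℤ + {t₀, t₁, …, t_m}. Then for every probability measure μ on ℝ that is absolutely continuous with respect to Lebesgue measure with a density that is a.e. equal to a constant on each interval J_{k,j}, the pushforward measure μ ∘ f⁻¹ is also absolutely continuous with a density a.e. equal to a constant on each interval J_{k,j}. -/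
open MeasureTheory

section Helpers

open Set

lemma measurable_of_countable_cover {ι : Type*} [Countable ι] {f : ℝ → ℝ}
    {s : ι → Set ℝ} (hs : ∀ i, MeasurableSet (s i)) (hcov : ⋃ i, s i = Set.univ)
    {g : ι → ℝ → ℝ} (hg : ∀ i, Measurable (g i))
    (hfg : ∀ i, ∀ x ∈ s i, f x = g i x) : Measurable f := by
  intro u hu
  have key : f ⁻¹' u = ⋃ i, s i ∩ g i ⁻¹' u := by
    ext x
    constructor
    · intro hx
      have hx' : x ∈ ⋃ i, s i := hcov ▸ Set.mem_univ x
      obtain ⟨i, hi⟩ := Set.mem_iUnion.1 hx'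
      exact Set.mem_iUnion.2 ⟨i, hi, by simpa [Set.mem_preimage, ← hfg i x hi] using hx⟩
    · intro hx
      obtain ⟨i, hi⟩ := Set.mem_iUnion.1 hx
      obtain ⟨hxs, hxt⟩ := hi
      simpa [Set.mem_preimage, ← hfg i x hxs] using hxt
  rw [key]
  exact MeasurableSet.iUnion fun i => (hs i).inter (hg i hu)

lemma exists_piece (t : ℕ → ℝ) : ∀ (m : ℕ) {y : ℝ}, t 0 ≤ y → y < t m →
    ∃ j < m, y ∈ Set.Ico (t j) (t (j+1)) := by
  intro m
  induction m with
  | zero => exact fun h0 hm => absurd hm (not_lt.2 h0)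
  | succ n ih =>
    intro y h0 hm
    by_cases h : t n ≤ y
    · exact ⟨n, n.lt_succ_self, h, hm⟩
    · obtain ⟨j, hj, hy⟩ := ih h0 (lt_of_not_ge h)
      exact ⟨j, hj.trans n.lt_succ_self, hy⟩

lemma grid_dichotomy (m : ℕ) (t : ℕ → ℝ)
    (ht0 : t 0 = -(1/2)) (htm : t m = 1/2)
    (hmono : ∀ i j : ℕ, i < j → j ≤ m → t i < t j)
    (k1 k2 k' : ℤ) (i1 i2 j : ℕ) (hi1 : i1 ≤ m) (hi2 : i2 ≤ m) (hj : j < m) :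
    Set.Ico ((k':ℝ) + t j) ((k':ℝ) + t (j+1)) ⊆ Set.Ico ((k1:ℝ) + t i1) ((k2:ℝ) + t i2) ∨
    Disjoint (Set.Ico ((k':ℝ) + t j) ((k':ℝ) + t (j+1)))
      (Set.Ico ((k1:ℝ) + t i1) ((k2:ℝ) + t i2)) := by
  have tmono : ∀ i j : ℕ, i ≤ j → j ≤ m → t i ≤ t j := fun i j h hjm =>
    h.lt_or_eq.elim (fun h' => (hmono i j h' hjm).le) (fun h' => by rw [h'])
  have tlo : ∀ i, i ≤ m → -(1/2 : ℝ) ≤ t i := fun i hi => ht0 ▸ tmono 0 i (Nat.zero_le i) hi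
  have thi : ∀ i, i ≤ m → t i ≤ (1/2 : ℝ) := fun i hi => htm ▸ tmono i m hi le_rfl
  have no_grid : ∀ (a : ℤ) (i : ℕ), i ≤ m →
      ¬(((k':ℝ) + t j < (a:ℝ) + t i) ∧ ((a:ℝ) + t i < (k':ℝ) + t (j+1))) := by
    rintro a i him ⟨h1, h2⟩
    have hio := tlo i him
    have hih := thi i him
    have hjo := tlo j hj.le
    have hjh := thi (j+1) hj
    have hak : a = k' := by
      have h1' : (-1 : ℝ) < ((a - k' : ℤ) : ℝ) := by push_cast; linarith
      have h2' : ((a - k' : ℤ) : ℝ) < 1 := by push_cast; linarith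
      have h1'' : (-1 : ℤ) < a - k' := by exact_mod_cast h1'
      have h2'' : a - k' < 1 := by exact_mod_cast h2'
      omega
    subst hak
    have h1' : t j < t i := by linarith
    have h2' : t i < t (j+1) := by linarith
    rcases le_or_gt i j with h | h
    · exact absurd (tmono i j h hj.le) (not_le.2 h1')
    · exact absurd (tmono (j+1) i h him) (not_le.2 h2')
  by_cases hd : Disjoint (Set.Ico ((k':ℝ) + t j) ((k':ℝ) + t (j+1)))
      (Set.Ico ((k1:ℝ) + t i1) ((k2:ℝ) + t i2))
  · exact Or.inr hd
  · left
    rw [Set.not_disjoint_iff] at hd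
    obtain ⟨x, hxK, hxI⟩ := hd
    have h1 : (k1:ℝ) + t i1 ≤ (k':ℝ) + t j := by
      by_contra h
      push_neg at h
      exact no_grid k1 i1 hi1 ⟨h, lt_of_le_of_lt hxI.1 hxK.2⟩
    have h2 : (k':ℝ) + t (j+1) ≤ (k2:ℝ) + t i2 := by
      by_contra h
      push_neg at h
      exact no_grid k2 i2 hi2 ⟨lt_of_le_of_lt hxK.1 hxI.2, h⟩
    exact Set.Ico_subset_Ico h1 h2

end Helpers

/-- `μ` is absolutely continuous w.r.t. Lebesgue measure with a density a.e. equal to a constant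
on each interval `J_{k,j} = [k + t_{j-1}, k + t_j)`, `k ∈ ℤ`, `1 ≤ j ≤ m`. -/
def HasPiecewiseConstantDensity (t : ℕ → ℝ) (m : ℕ) (μ : Measure ℝ) : Prop :=
  ∃ ρ : ℝ → ENNReal, μ = volume.withDensity ρ ∧
    ∀ (k : ℤ) (j : ℕ), j < m → ∃ c : ENNReal,
      ∀ᵐ x ∂(volume.restrict (Set.Ico ((k : ℝ) + t j) ((k : ℝ) + t (j+1)))), ρ x = c

/-- If a lift-1 map `f` is affine with nonzero slope on each piece `J_{0,j}` of the main interval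
and maps each piece onto a half-open interval whose endpoints lie in `ℤ + {t₀, …, t_m}`, then its
Perron–Frobenius operator (pushforward) maps probability measures with densities constant on the
pieces `J_{k,j}` to measures of the same kind. -/
theorem pushforward_piecewise_constant_density
    (m : ℕ) (hm : 0 < m) (t : ℕ → ℝ)
    (ht0 : t 0 = -(1/2)) (htm : t m = 1/2)
    (hmono : ∀ i j : ℕ, i < j → j ≤ m → t i < t j)
    (f : ℝ → ℝ)
    (hlift : ∀ (x : ℝ) (k : ℤ), f (x + k) = f x + k)
    (haffine : ∀ j : ℕ, j < m → ∃ c d : ℝ, c ≠ 0 ∧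
      ∀ x ∈ Set.Ico (t j) (t (j+1)), f x = c * x + d)
    (himage : ∀ j : ℕ, j < m → ∃ u v : ℝ,
      (∃ (k : ℤ) (i : ℕ), i ≤ m ∧ u = (k : ℝ) + t i) ∧
      (∃ (k : ℤ) (i : ℕ), i ≤ m ∧ v = (k : ℝ) + t i) ∧
      (f '' Set.Ico (t j) (t (j+1)) = Set.Ico u v ∨
       f '' Set.Ico (t j) (t (j+1)) = Set.Ioc u v)) :
    ∀ μ : Measure ℝ, IsProbabilityMeasure μ → HasPiecewiseConstantDensity t m μ →
      HasPiecewiseConstantDensity t m (μ.map f) := by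
  classical
  rintro μ _hprob ⟨ρ, hρ, hconst⟩
  choose cL dL hc0 hcd using haffine
  choose u v hu hv him using himage
  choose cc hcc using hconst
  have tmono : ∀ i j : ℕ, i ≤ j → j ≤ m → t i ≤ t j := fun i j h hjm =>
    h.lt_or_eq.elim (fun h' => (hmono i j h' hjm).le) (fun h' => by rw [h'])
  have tlo : ∀ i, i ≤ m → -(1/2 : ℝ) ≤ t i := fun i hi => ht0 ▸ tmono 0 i (Nat.zero_le i) hi
  have thi : ∀ i, i ≤ m → t i ≤ (1/2 : ℝ) := fun i hi => htm ▸ tmono i m hi le_rfl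
  -- the pieces
  set J : ℤ × Fin m → Set ℝ :=
    fun p => Set.Ico ((p.1 : ℝ) + t p.2.1) ((p.1 : ℝ) + t (p.2.1 + 1)) with hJdef
  have hJmeas : ∀ p, MeasurableSet (J p) := fun p => measurableSet_Ico
  -- the affine maps
  set g : ℤ × Fin m → ℝ → ℝ := fun p x =>
    cL p.2.1 p.2.isLt * x + (dL p.2.1 p.2.isLt + (p.1 : ℝ) * (1 - cL p.2.1 p.2.isLt)) with hgdef
  have hgmeas : ∀ p, Measurable (g p) := fun p =>
    (measurable_id.const_mul _).add_const _
  -- the image intervals and coefficients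
  set I : ℤ × Fin m → Set ℝ := fun p =>
    Set.Ico (u p.2.1 p.2.isLt + (p.1 : ℝ)) (v p.2.1 p.2.isLt + (p.1 : ℝ)) with hIdef
  set a : ℤ × Fin m → ENNReal := fun p =>
    cc p.1 p.2.1 p.2.isLt * ENNReal.ofReal |(cL p.2.1 p.2.isLt)⁻¹| with hadef
  -- covering
  have hcover : ⋃ p, J p = Set.univ := by
    ext x
    simp only [Set.mem_iUnion, Set.mem_univ, iff_true]
    set k : ℤ := ⌊x + 1/2⌋ with hk
    have hk1 : (k : ℝ) ≤ x + 1/2 := Int.floor_le _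
    have hk2 : x + 1/2 < k + 1 := Int.lt_floor_add_one _
    have h0 : t 0 ≤ x - k := by rw [ht0]; linarith
    have hmx : x - (k:ℝ) < t m := by rw [htm]; linarith
    obtain ⟨j, hj, hy⟩ := exists_piece t m h0 hmx
    refine ⟨(k, ⟨j, hj⟩), ?_, ?_⟩
    · show (k:ℝ) + t j ≤ x
      have := hy.1; linarith
    · show x < (k:ℝ) + t (j+1)
      have := hy.2; linarith
  -- disjointness
  have hdisj : Pairwise (Function.onFun Disjoint J) := by
    intro p q hpq
    have key : ∀ p q : ℤ × Fin m,
        ((p.1 : ℝ) < q.1 ∨ (p.1 = q.1 ∧ (p.2 : ℕ) < (q.2 : ℕ))) → Disjoint (J p) (J q) := by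
      rintro p q (h | ⟨h1, h2⟩)
      · rw [Set.Ico_disjoint_Ico]
        have hq : (p.1 : ℝ) + 1 ≤ q.1 := by
          have : p.1 < q.1 := by exact_mod_cast h
          have : p.1 + 1 ≤ q.1 := this
          exact_mod_cast this
        have h1 : t (p.2.1 + 1) ≤ 1/2 := thi _ p.2.isLt
        have h2 : -(1/2 : ℝ) ≤ t q.2.1 := tlo _ q.2.isLt.le
        refine le_trans (min_le_left _ _) (le_trans ?_ (le_max_right _ _))
        linarith
      · rw [Set.Ico_disjoint_Ico]
        have h3 : t (p.2.1 + 1) ≤ t q.2.1 := tmono _ _ h2 q.2.isLt.le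
        refine le_trans (min_le_left _ _) (le_trans ?_ (le_max_right _ _))
        rw [h1]
        linarith
    rcases lt_trichotomy p.1 q.1 with h | h | h
    · exact key p q (Or.inl (by exact_mod_cast h))
    · have hne : (p.2 : ℕ) ≠ (q.2 : ℕ) := by
        intro h2
        exact hpq (Prod.ext h (Fin.ext h2))
      rcases hne.lt_or_gt with h2 | h2
      · exact key p q (Or.inr ⟨by exact_mod_cast h, h2⟩)
      · exact (key q p (Or.inr ⟨by exact_mod_cast h.symm, h2⟩)).symm
    · exact (key q p (Or.inl (by exact_mod_cast h))).symm
  -- decomposition of μ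
  have hμsum : μ = Measure.sum (fun p => μ.restrict (J p)) := by
    conv_lhs => rw [← Measure.restrict_univ (μ := μ), ← hcover]
    exact Measure.restrict_iUnion hdisj hJmeas
  -- f agrees with g p on J p
  have hfg : ∀ p, ∀ x ∈ J p, f x = g p x := by
    intro p x hx
    have hx1 : t p.2.1 ≤ x - p.1 := by have := hx.1; linarith
    have hx2 : x - (p.1:ℝ) < t (p.2.1 + 1) := by have := hx.2; linarith
    have haff := hcd p.2.1 p.2.isLt (x - p.1) ⟨hx1, hx2⟩
    have hl := hlift (x - p.1) p.1
    have hxx : x - (p.1:ℝ) + p.1 = x := by ring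
    rw [hxx] at hl
    rw [hl, haff, hgdef]
    ring
  -- f is measurable
  have hfmeas : Measurable f := measurable_of_countable_cover hJmeas hcover hgmeas hfg
  -- per-piece pushforward
  have hpiece : ∀ p, (μ.restrict (J p)).map f = a p • volume.restrict (I p) := by
    intro p
    set c : ℝ := cL p.2.1 p.2.isLt with hcdef
    set e : ℝ := dL p.2.1 p.2.isLt + (p.1 : ℝ) * (1 - c) with hedef
    have hc : c ≠ 0 := hc0 p.2.1 p.2.isLt
    have hge : g p = fun x => c * x + e := rfl
    have hemb : MeasurableEmbedding (g p) := by
      have : g p = ⇑((Homeomorph.mulLeft₀ c hc).trans (Homeomorph.addRight e)) := by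
        ext x; simp [Homeomorph.trans_apply, hge]
      rw [this]
      exact Homeomorph.measurableEmbedding _
    -- step 1 : restriction of μ is a constant multiple of Lebesgue
    have step1 : μ.restrict (J p) = cc p.1 p.2.1 p.2.isLt • volume.restrict (J p) := by
      rw [hρ, restrict_withDensity (hJmeas p),
        withDensity_congr_ae (hcc p.1 p.2.1 p.2.isLt), withDensity_const]
    -- step 2 : map f = map g on the restriction
    have step2 : (volume.restrict (J p)).map f = (volume.restrict (J p)).map (g p) :=
      Measure.map_congr ((ae_restrict_mem (hJmeas p)).mono fun x hx => hfg p x hx)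
    -- step 3 : restriction and map commute
    have step3 : (volume.restrict (J p)).map (g p) = (volume.map (g p)).restrict (g p '' J p) := by
      rw [hemb.restrict_map, Set.preimage_image_eq _ hemb.injective]
    -- step 4 : pushforward of Lebesgue by an affine map
    have step4 : volume.map (g p) = ENNReal.ofReal |c⁻¹| • volume := by
      have h : g p = (fun x : ℝ => x + e) ∘ (fun x : ℝ => c * x) := rfl
      rw [h, ← Measure.map_map (measurable_add_const e) (measurable_const_mul c),
        Real.map_volume_mul_left hc, Measure.map_smul, map_add_right_eq_self]
    -- step 5 : the image of the piece
    have step5 : volume.restrict (g p '' J p) = volume.restrict (I p) := by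
      have him1 : g p '' J p = f '' J p :=
        Set.image_congr fun x hx => (hfg p x hx).symm
      have him2 : J p = (fun x => x + (p.1 : ℝ)) '' Set.Ico (t p.2.1) (t (p.2.1 + 1)) := by
        rw [Set.image_add_const_Ico, hJdef]
        dsimp only
        rw [add_comm (t p.2.1) ((p.1:ℝ)), add_comm (t (p.2.1+1)) ((p.1:ℝ))]
      have him3 : f '' ((fun x => x + (p.1 : ℝ)) '' Set.Ico (t p.2.1) (t (p.2.1 + 1)))
          = (fun y => y + (p.1 : ℝ)) '' (f '' Set.Ico (t p.2.1) (t (p.2.1 + 1))) := by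
        rw [← Set.image_comp, ← Set.image_comp]
        refine Set.image_congr fun x _ => ?_
        simp only [Function.comp_apply]
        exact hlift x p.1
      rw [him1, him2, him3]
      rcases him p.2.1 p.2.isLt with hI | hI
      · rw [hI, Set.image_add_const_Ico]
      · rw [hI, Set.image_add_const_Ioc, hIdef]
        exact Measure.restrict_congr_set (Ioc_ae_eq_Icc.trans Ico_ae_eq_Icc.symm)
    calc (μ.restrict (J p)).map f
        = (cc p.1 p.2.1 p.2.isLt • volume.restrict (J p)).map f := by rw [step1]
      _ = cc p.1 p.2.1 p.2.isLt • ((volume.restrict (J p)).map f) := Measure.map_smul _ _ _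
      _ = cc p.1 p.2.1 p.2.isLt • ((volume.map (g p)).restrict (g p '' J p)) := by
          rw [step2, step3]
      _ = cc p.1 p.2.1 p.2.isLt •
            ((ENNReal.ofReal |c⁻¹| • volume).restrict (g p '' J p)) := by rw [step4]
      _ = cc p.1 p.2.1 p.2.isLt •
            (ENNReal.ofReal |c⁻¹| • volume.restrict (I p)) := by
          rw [Measure.restrict_smul, step5]
      _ = a p • volume.restrict (I p) := by rw [smul_smul, hadef]
  -- global pushforward
  have hmap : μ.map f = Measure.sum (fun p => a p • volume.restrict (I p)) := by
    conv_lhs => rw [hμsum]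
    rw [Measure.map_sum hfmeas.aemeasurable]
    exact congrArg Measure.sum (funext hpiece)
  -- density functions
  set F : ℤ × Fin m → ℝ → ENNReal := fun p => (I p).indicator (fun _ => a p) with hFdef
  have hFmeas : ∀ p, Measurable (F p) := fun p => measurable_const.indicator measurableSet_Ico
  have hFsum : Measure.sum (fun p => a p • volume.restrict (I p))
      = volume.withDensity (fun x => ∑' p, F p x) := by
    have h1 : ∀ p, a p • volume.restrict (I p) = volume.withDensity (F p) := by
      intro p
      rw [hFdef]
      dsimp only
      rw [withDensity_indicator measurableSet_Ico, withDensity_const]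
    rw [show (fun p => a p • volume.restrict (I p)) = fun p => volume.withDensity (F p)
      from funext h1, ← withDensity_tsum hFmeas]
    congr 1
    funext x
    exact ENNReal.tsum_apply
  refine ⟨fun x => ∑' p, F p x, by rw [hmap, hFsum], ?_⟩
  -- a.e. constancy on the pieces
  intro k' j hj
  refine ⟨∑' p, (if Set.Ico ((k':ℝ) + t j) ((k':ℝ) + t (j+1)) ⊆ I p then a p else 0), ?_⟩
  filter_upwards [ae_restrict_mem measurableSet_Ico] with x hx
  refine tsum_congr fun p => ?_
  obtain ⟨ku, iu, hiu, hueq⟩ := hu p.2.1 p.2.isLt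
  obtain ⟨kv, iv, hiv, hveq⟩ := hv p.2.1 p.2.isLt
  have hIeq : I p = Set.Ico (((ku + p.1 : ℤ) : ℝ) + t iu) (((kv + p.1 : ℤ) : ℝ) + t iv) := by
    rw [hIdef]
    dsimp only
    rw [hueq, hveq]
    push_cast
    congr 1 <;> ring
  have hdich := grid_dichotomy m t ht0 htm hmono (ku + p.1) (kv + p.1) k' iu iv j hiu hiv hj
  rw [← hIeq] at hdich
  rcases hdich with hsub | hd
  · rw [if_pos hsub, hFdef]
    exact Set.indicator_of_mem (hsub hx) _
  · have hxI : x ∉ I p := Set.disjoint_left.1 hd hx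
    rw [if_neg (fun hsub => hxI (hsub hx)), hFdef]
    exact Set.indicator_of_notMem hxI _
end

section
/- Let m, n be integers with 0 < m < n and let ε₁, ε₂ ∈ {−1, 1}. Then (2n − ε₂)² + 8mε₁ ≥ 0, and the numbers Λ = (2n + ε₂ + √((2n − ε₂)² + 8mε₁))/2 and ξ = 2m/(2n − ε₂ + √((2n − ε₂)² + 8mε₁)) satisfy the system Λξ = m + ε₂ξ and Λ/2 = n + ε₁ξ, with ξ > 0. -/
/-- For integers `0 < m < n` and signs `ε₁, ε₂ = ±1`, the discriminant `(2n - ε₂)² + 8mε₁` is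
nonnegative and the numbers `Λ = (2n + ε₂ + √((2n-ε₂)² + 8mε₁))/2` and
`ξ = 2m/(2n - ε₂ + √((2n-ε₂)² + 8mε₁))` solve the consistency system
`Λξ = m + ε₂ξ`, `Λ/2 = n + ε₁ξ`, with `ξ > 0`. -/
theorem markov_partition_consistency_solution
    (m n : ℤ) (hm : 0 < m) (hmn : m < n) (ε₁ ε₂ : ℤ)
    (hε₁ : ε₁ = 1 ∨ ε₁ = -1) (hε₂ : ε₂ = 1 ∨ ε₂ = -1) :
    (0 : ℝ) ≤ (2 * (n : ℝ) - (ε₂ : ℝ))^2 + 8 * (m : ℝ) * (ε₁ : ℝ) ∧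
    (2 * (n : ℝ) + (ε₂ : ℝ) + Real.sqrt ((2 * (n : ℝ) - (ε₂ : ℝ))^2 + 8 * (m : ℝ) * (ε₁ : ℝ))) / 2
        * (2 * (m : ℝ) /
          (2 * (n : ℝ) - (ε₂ : ℝ) + Real.sqrt ((2 * (n : ℝ) - (ε₂ : ℝ))^2 + 8 * (m : ℝ) * (ε₁ : ℝ))))
      = (m : ℝ) + (ε₂ : ℝ) *
          (2 * (m : ℝ) /
          (2 * (n : ℝ) - (ε₂ : ℝ) + Real.sqrt ((2 * (n : ℝ) - (ε₂ : ℝ))^2 + 8 * (m : ℝ) * (ε₁ : ℝ)))) ∧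
    (2 * (n : ℝ) + (ε₂ : ℝ) + Real.sqrt ((2 * (n : ℝ) - (ε₂ : ℝ))^2 + 8 * (m : ℝ) * (ε₁ : ℝ))) / 2 / 2
      = (n : ℝ) + (ε₁ : ℝ) *
          (2 * (m : ℝ) /
          (2 * (n : ℝ) - (ε₂ : ℝ) + Real.sqrt ((2 * (n : ℝ) - (ε₂ : ℝ))^2 + 8 * (m : ℝ) * (ε₁ : ℝ)))) ∧
    0 < 2 * (m : ℝ) /
          (2 * (n : ℝ) - (ε₂ : ℝ) + Real.sqrt ((2 * (n : ℝ) - (ε₂ : ℝ))^2 + 8 * (m : ℝ) * (ε₁ : ℝ))) := by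
  have hm' : (1:ℝ) ≤ (m:ℝ) := by exact_mod_cast hm
  have hn' : (m:ℝ) + 1 ≤ (n:ℝ) := by exact_mod_cast hmn
  have he2 : (ε₂:ℝ) = 1 ∨ (ε₂:ℝ) = -1 := by rcases hε₂ with h|h <;> [left; right] <;> simp [h]
  have ha : (3:ℝ) ≤ 2 * (n:ℝ) - (ε₂:ℝ) := by rcases he2 with h|h <;> rw [h] <;> linarith
  have he1 : (ε₁:ℝ) = 1 ∨ (ε₁:ℝ) = -1 := by rcases hε₁ with h|h <;> [left; right] <;> simp [h]
  have ha2 : 2 * (m:ℝ) + 1 ≤ 2 * (n:ℝ) - (ε₂:ℝ) := by rcases he2 with h|h <;> rw [h] <;> linarith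
  have hD : (0:ℝ) ≤ (2 * (n:ℝ) - (ε₂:ℝ))^2 + 8 * (m:ℝ) * (ε₁:ℝ) := by
    rcases he1 with h|h <;> rw [h] <;> nlinarith [sq_nonneg (2 * (m:ℝ) - 1), ha2]
  set s := Real.sqrt ((2 * (n:ℝ) - (ε₂:ℝ))^2 + 8 * (m:ℝ) * (ε₁:ℝ)) with hsdef
  have hs0 : 0 ≤ s := Real.sqrt_nonneg _
  have hs2 : s^2 = (2 * (n:ℝ) - (ε₂:ℝ))^2 + 8 * (m:ℝ) * (ε₁:ℝ) := Real.sq_sqrt hD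
  have hden : (0:ℝ) < 2 * (n:ℝ) - (ε₂:ℝ) + s := by linarith
  refine ⟨hD, ?_, ?_, ?_⟩
  · field_simp
    ring
  · field_simp
    nlinarith [hs2]
  · positivity
end

section
/- Let p : ℤ → ℝ satisfy p_k ≥ 0 for all k, Σ_{k∈ℤ} p_k = 1, Σ_{k∈ℤ} k² p_k < ∞; let σ₁ = Σ_{k∈ℤ} k p_k and v = Σ_{k∈ℤ} k² p_k − σ₁², and assume v > 0 and that the subgroup of ℤ generated by {k : p_k > 0} is all of ℤ (the gcd of the support is 1). Define P⁰ : ℤ → ℝ by P⁰_k = 1 if k = 0 and 0 otherwise, and recursively P^{n+1}_k = Σ_{l∈ℤ} p_{k−l} P^n_l. Then sup_{k∈ℤ} | P^n_k − (1/√(2πvn)) · exp(−(k − σ₁n)²/(2vn)) | → 0 as n → ∞. -/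
open scoped Real

open MeasureTheory Complex Filter
open scoped Topology

noncomputable def phiC (p : ℤ → ℝ) (t : ℝ) : ℂ :=
  ∑' k : ℤ, (p k : ℂ) * Complex.exp ((k : ℂ) * t * Complex.I)

lemma norm_term (p : ℤ → ℝ) (hpos : ∀ k, 0 ≤ p k) (t : ℝ) (k : ℤ) :
    ‖(p k : ℂ) * Complex.exp ((k : ℂ) * t * Complex.I)‖ = p k := by
  have h : ((k : ℂ) * t * Complex.I) = ((k * t : ℝ) : ℂ) * Complex.I := by push_cast; ring
  rw [norm_mul, h, Complex.norm_exp_ofReal_mul_I, mul_one, Complex.norm_real,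
    Real.norm_eq_abs, _root_.abs_of_nonneg (hpos k)]

lemma phi_summable (p : ℤ → ℝ) (hpos : ∀ k, 0 ≤ p k) (hs : Summable p) (t : ℝ) :
    Summable (fun k : ℤ => (p k : ℂ) * Complex.exp ((k : ℂ) * t * Complex.I)) := by
  refine Summable.of_norm_bounded hs (fun k => le_of_eq (norm_term p hpos t k))

lemma phi_norm_le (p : ℤ → ℝ) (hpos : ∀ k, 0 ≤ p k) (hs : Summable p)
    (hsum : ∑' k, p k = 1) (t : ℝ) : ‖phiC p t‖ ≤ 1 := by
  have := norm_tsum_le_tsum_norm (f := fun k : ℤ => (p k : ℂ) * Complex.exp ((k : ℂ) * t * Complex.I))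
    (by simpa only [norm_term p hpos t] using hs)
  calc ‖phiC p t‖ ≤ ∑' k, ‖(p k : ℂ) * Complex.exp ((k : ℂ) * t * Complex.I)‖ := this
    _ = ∑' k, p k := by simp only [norm_term p hpos t]
    _ = 1 := hsum

lemma phi_continuous (p : ℤ → ℝ) (hpos : ∀ k, 0 ≤ p k) (hs : Summable p) :
    Continuous (phiC p) := by
  apply continuous_tsum (u := p) ?_ hs (fun k x => le_of_eq (norm_term p hpos x k))
  intro k
  exact continuous_const.mul (Complex.continuous_exp.comp (by continuity))

lemma integral_char (m : ℤ) :
    (∫ t in Set.Ioc (-π) π, Complex.exp ((m : ℂ) * t * Complex.I)) =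
      if m = 0 then (2 * π : ℂ) else 0 := by
  rw [← intervalIntegral.integral_of_le (by linarith [Real.pi_pos] : (-π : ℝ) ≤ π)]
  split_ifs with hm
  · subst hm; simp; push_cast; ring
  · have hc : ((m : ℂ) * Complex.I) ≠ 0 := by
      simp [Complex.ext_iff, hm]
    have : ∀ t : ℝ, (m : ℂ) * t * Complex.I = ((m : ℂ) * Complex.I) * t := fun t => by ring
    simp only [this]
    rw [integral_exp_mul_complex hc]
    have h1 : Complex.exp ((m : ℂ) * Complex.I * (π : ℂ)) = (-1 : ℂ) ^ m := by
      rw [show (m : ℂ) * Complex.I * (π : ℂ) = (m : ℂ) * ((π : ℂ) * Complex.I) by ring,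
        Complex.exp_int_mul, Complex.exp_pi_mul_I]
    have h2 : Complex.exp ((m : ℂ) * Complex.I * ((-π : ℝ) : ℂ)) = (-1 : ℂ) ^ m := by
      rw [show (m : ℂ) * Complex.I * ((-π : ℝ) : ℂ) = (-m : ℤ) * ((π : ℂ) * Complex.I) by
        push_cast; ring, Complex.exp_int_mul, Complex.exp_pi_mul_I]
      rw [zpow_neg]
      have : ((-1 : ℂ) ^ m)⁻¹ * ((-1:ℂ)^m) = 1 := by
        rw [inv_mul_cancel₀]; exact zpow_ne_zero m (by norm_num)
      field_simp [zpow_ne_zero m (show (-1:ℂ) ≠ 0 by norm_num)]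
      have hsq1 : ((-1:ℂ) ^ m) ^ 2 = 1 := by
        rw [← zpow_natCast, ← zpow_mul, mul_comm, zpow_mul]; norm_num
      exact hsq1.symm
    rw [h1, h2, sub_self, zero_div]

lemma norm_convex_lt {pa pb : ℝ} (ha : 0 < pa) (hb : 0 < pb) {w : ℂ}
    (hw : ‖w‖ = 1) (h1 : w ≠ 1) : ‖(pa : ℂ) + (pb : ℂ) * w‖ < pa + pb := by
  have hre : w.re < 1 := by
    rcases lt_or_eq_of_le ((Complex.re_le_norm w).trans_eq hw) with h | h
    · exact h
    · exfalso
      have hsq : w.re * w.re + w.im * w.im = 1 := by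
        have := Complex.sq_norm w
        rw [Complex.normSq_apply] at this
        rw [← this]; rw [hw]; norm_num
    -- from re = 1 and re²+im²=1, im = 0 so w = 1
      apply h1
      have him : w.im = 0 := by nlinarith
      apply Complex.ext <;> simp [← h, him]
  have hnsq : Complex.normSq ((pa : ℂ) + (pb : ℂ) * w) < (pa + pb) ^ 2 := by
    have h2 : w.re * w.re + w.im * w.im = 1 := by
      have := Complex.sq_norm w
      rw [Complex.normSq_apply] at this
      rw [← this]; rw [hw]; norm_num
    rw [Complex.normSq_apply]
    simp only [Complex.add_re, Complex.add_im, Complex.mul_re, Complex.mul_im,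
      Complex.ofReal_re, Complex.ofReal_im]
    have h3 : pb * pb * (w.re * w.re) + pb * pb * (w.im * w.im) = pb * pb := by
      nlinarith [h2]
    nlinarith [h3, mul_pos (mul_pos ha hb) (sub_pos.mpr hre)]
  have := Complex.sq_norm ((pa : ℂ) + (pb : ℂ) * w)
  have hlt : ‖(pa : ℂ) + (pb : ℂ) * w‖ ^ 2 < (pa + pb) ^ 2 := by
    rw [this]
    exact hnsq
  exact lt_of_pow_lt_pow_left₀ 2 (by positivity) hlt

lemma phi_norm_lt (p : ℤ → ℝ) (hpos : ∀ k, 0 ≤ p k) (hs : Summable p)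
    (hsum : ∑' k, p k = 1) {a b : ℤ} (hab : a ≠ b) (hpa : 0 < p a) (hpb : 0 < p b)
    {t : ℝ} (ht : Complex.exp (((b - a : ℤ) : ℂ) * t * Complex.I) ≠ 1) :
    ‖phiC p t‖ < 1 := by
  set f : ℤ → ℂ := fun k => (p k : ℂ) * Complex.exp ((k : ℂ) * t * Complex.I) with hf
  have hsf : Summable f := phi_summable p hpos hs t
  set S : Finset ℤ := {a, b} with hS
  have hsplit : ∑ k ∈ S, f k + ∑' (k : {x : ℤ // x ∉ S}), f k = ∑' k, f k :=
    hsf.sum_add_tsum_subtype_compl S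
  have hsplitp : ∑ k ∈ S, p k + ∑' (k : {x : ℤ // x ∉ S}), p k.1 = 1 := by
    rw [hs.sum_add_tsum_subtype_compl S, hsum]
  have hsumS : ∑ k ∈ S, p k = p a + p b := Finset.sum_pair hab
  -- tail bound
  have htail : ‖∑' (k : {x : ℤ // x ∉ S}), f k‖ ≤ ∑' (k : {x : ℤ // x ∉ S}), p k.1 := by
    have hsub : Summable (fun k : {x : ℤ // x ∉ S} => ‖f k.1‖) := by
      have : Summable (fun k : {x : ℤ // x ∉ S} => p k.1) :=
        hs.subtype _
      exact this.congr (fun k => (norm_term p hpos t k.1).symm)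
    calc ‖∑' (k : {x : ℤ // x ∉ S}), f k‖ ≤ ∑' (k : {x : ℤ // x ∉ S}), ‖f k.1‖ :=
          norm_tsum_le_tsum_norm hsub
      _ = ∑' (k : {x : ℤ // x ∉ S}), p k.1 := by
          exact tsum_congr fun k => norm_term p hpos t k.1
  -- head strict bound
  have hhead : ‖∑ k ∈ S, f k‖ < p a + p b := by
    rw [hS, Finset.sum_pair hab]
    have hexp : Complex.exp ((b : ℂ) * t * Complex.I) =
        Complex.exp ((a : ℂ) * t * Complex.I) * Complex.exp (((b - a : ℤ) : ℂ) * t * Complex.I) := by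
      rw [← Complex.exp_add]
      congr 1
      push_cast; ring
    have : f a + f b = Complex.exp ((a : ℂ) * t * Complex.I) *
        ((p a : ℂ) + (p b : ℂ) * Complex.exp (((b - a : ℤ) : ℂ) * t * Complex.I)) := by
      rw [hf]; simp only []; rw [hexp]; ring
    rw [this, norm_mul]
    have hna : ‖Complex.exp ((a : ℂ) * t * Complex.I)‖ = 1 := by
      rw [show ((a : ℂ) * t * Complex.I) = ((a * t : ℝ) : ℂ) * Complex.I by push_cast; ring,
        Complex.norm_exp_ofReal_mul_I]
    rw [hna, one_mul]
    have hnw : ‖Complex.exp (((b - a : ℤ) : ℂ) * t * Complex.I)‖ = 1 := by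
      rw [show (((b - a : ℤ) : ℂ) * t * Complex.I) = (((b - a : ℤ) * t : ℝ) : ℂ) * Complex.I by
        push_cast; ring, Complex.norm_exp_ofReal_mul_I]
    exact norm_convex_lt hpa hpb hnw ht
  have : ‖phiC p t‖ ≤ ‖∑ k ∈ S, f k‖ + ∑' (k : {x : ℤ // x ∉ S}), p k.1 := by
    rw [phiC, ← hsplit]
    exact (norm_add_le _ _).trans (by gcongr)
  calc ‖phiC p t‖ ≤ ‖∑ k ∈ S, f k‖ + ∑' (k : {x : ℤ // x ∉ S}), p k.1 := this
    _ < (p a + p b) + ∑' (k : {x : ℤ // x ∉ S}), p k.1 := by linarith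
    _ = 1 := by linarith [hsplitp, hsumS]

lemma bad_countable (d : ℤ) (hd : d ≠ 0) :
    Set.Countable {t : ℝ | Complex.exp ((d : ℂ) * t * Complex.I) = 1} := by
  apply Set.Countable.mono ?_ (Set.countable_range (fun n : ℤ => 2 * π * n / d))
  intro t ht
  rw [Set.mem_setOf_eq, Complex.exp_eq_one_iff] at ht
  obtain ⟨n, hn⟩ := ht
  refine ⟨n, ?_⟩
  have hI : ((d : ℂ) * t) * Complex.I = ((n : ℂ) * (2 * π)) * Complex.I := by
    rw [← mul_assoc] at hn ⊢
    convert hn using 2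
    ring
  have h2 := mul_right_cancel₀ Complex.I_ne_zero hI
  have hre : (d : ℝ) * t = n * (2 * π) := by exact_mod_cast congrArg Complex.re h2
  have hd' : (d : ℝ) ≠ 0 := Int.cast_ne_zero.mpr hd
  field_simp
  linarith [hre]

lemma integral_pow_tendsto (p : ℤ → ℝ) (hpos : ∀ k, 0 ≤ p k) (hs : Summable p)
    (hsum : ∑' k, p k = 1) {a b : ℤ} (hab : a ≠ b) (hpa : 0 < p a) (hpb : 0 < p b) :
    Tendsto (fun n : ℕ => ∫ t in Set.Ioc (-π) π, ‖phiC p t‖ ^ n) atTop (𝓝 0) := by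
  have hcont : Continuous (phiC p) := phi_continuous p hpos hs
  have : (0 : ℝ) = ∫ t in Set.Ioc (-π) π, (0 : ℝ) := by simp
  rw [this]
  have hfin : IsFiniteMeasure (volume.restrict (Set.Ioc (-π) π)) := by
    constructor
    rw [Measure.restrict_apply_univ]
    exact measure_Ioc_lt_top
  apply tendsto_integral_of_dominated_convergence (bound := fun _ => (1 : ℝ))
  · exact fun n => ((hcont.norm.pow n)).aestronglyMeasurable
  · exact integrable_const 1
  · intro n
    filter_upwards with t
    rw [Real.norm_eq_abs, _root_.abs_of_nonneg (by positivity)]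
    exact pow_le_one₀ (norm_nonneg _) (phi_norm_le p hpos hs hsum t)
  · have hZ : volume {t : ℝ | Complex.exp (((b - a : ℤ) : ℂ) * t * Complex.I) = 1} = 0 :=
      Set.Countable.measure_zero (bad_countable (b - a) (sub_ne_zero.mpr (Ne.symm hab))) _
    have hae : ∀ᵐ t : ℝ, t ∉ {t : ℝ | Complex.exp (((b - a : ℤ) : ℂ) * t * Complex.I) = 1} :=
      measure_eq_zero_iff_ae_notMem.mp hZ
    apply ae_restrict_of_ae
    filter_upwards [hae] with t ht
    have hlt : ‖phiC p t‖ < 1 := phi_norm_lt p hpos hs hsum hab hpa hpb ht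
    have := tendsto_pow_atTop_nhds_zero_of_lt_one (norm_nonneg _) hlt
    exact this

noncomputable def gC (p : ℤ → ℝ) (n : ℕ) (k l : ℤ) (t : ℝ) : ℂ :=
  (p (k - l) : ℂ) * (phiC p t ^ n * Complex.exp (-(l : ℂ) * t * Complex.I))

set_option maxHeartbeats 1000000 in
/-- Local central limit theorem for the convolution recursion
`P^{n+1}_k = Σ_l p_{k-l} P^n_l` with `P⁰ = δ₀`: if the lattice distribution `p` has mean `σ₁`,
positive variance `v`, a finite second moment, and its support generates all of `ℤ`, then
`sup_k |P^n_k - (2πvn)^{-1/2} exp(-(k - σ₁ n)²/(2vn))| → 0` as `n → ∞`. -/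
theorem local_clt_for_lattice_convolution
    (p : ℤ → ℝ) (hpos : ∀ k : ℤ, 0 ≤ p k)
    (hsummable : Summable p) (hsum : ∑' k : ℤ, p k = 1)
    (hmom2 : Summable (fun k : ℤ => (k : ℝ)^2 * p k))
    (σ₁ v : ℝ) (hσ₁ : σ₁ = ∑' k : ℤ, (k : ℝ) * p k)
    (hv : v = (∑' k : ℤ, (k : ℝ)^2 * p k) - σ₁^2) (hvpos : 0 < v)
    (hgen : AddSubgroup.closure {k : ℤ | 0 < p k} = ⊤)
    (P : ℕ → ℤ → ℝ)
    (hP0 : ∀ k : ℤ, P 0 k = if k = 0 then 1 else 0)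
    (hPrec : ∀ (n : ℕ) (k : ℤ), P (n+1) k = ∑' l : ℤ, p (k - l) * P n l) :
    ∀ ε > 0, ∃ N : ℕ, ∀ n ≥ N, ∀ k : ℤ,
      |P n k - (1 / Real.sqrt (2 * π * v * n)) *
        Real.exp (-((k : ℝ) - σ₁ * n)^2 / (2 * v * n))| < ε := by
  -- two distinct support points
  have hex : ∃ a, 0 < p a := by
    by_contra h
    push_neg at h
    have hz : ∀ k, p k = 0 := fun k => le_antisymm (h k) (hpos k)
    rw [tsum_congr hz, tsum_zero] at hsum
    norm_num at hsum
  obtain ⟨a, hpa⟩ := hex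
  have hex2 : ∃ b, a ≠ b ∧ 0 < p b := by
    by_contra h
    push_neg at h
    have hz : ∀ b, b ≠ a → p b = 0 := by
      intro b hb
      exact le_antisymm (h b (Ne.symm hb)) (hpos b)
    have h1 : ∑' k, p k = p a := tsum_eq_single a hz
    have hpa1 : p a = 1 := by rw [← h1, hsum]
    have h2 : ∑' k : ℤ, (k : ℝ) * p k = (a : ℝ) * p a :=
      tsum_eq_single a (fun b hb => by rw [hz b hb, mul_zero])
    have h3 : ∑' k : ℤ, (k : ℝ)^2 * p k = (a : ℝ)^2 * p a :=
      tsum_eq_single a (fun b hb => by rw [hz b hb, mul_zero])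
    rw [h3, hpa1, mul_one] at hv
    rw [h2, hpa1, mul_one] at hσ₁
    rw [hσ₁] at hv
    simp at hv
    rw [hv] at hvpos
    norm_num at hvpos
  obtain ⟨b, hab, hpb⟩ := hex2
  -- invariant
  have hInv : ∀ n, (∀ k, 0 ≤ P n k) ∧ Summable (P n) ∧ ∑' k, P n k = 1 := by
    intro n
    induction n with
    | zero =>
      refine ⟨fun k => by rw [hP0]; split <;> norm_num, ?_, ?_⟩
      · exact ((hasSum_ite_eq (0:ℤ) (1:ℝ)).summable).congr (fun k => (hP0 k).symm)
      · rw [tsum_congr hP0]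
        exact (hasSum_ite_eq (0:ℤ) (1:ℝ)).tsum_eq
    | succ n ih =>
      obtain ⟨hnn, hsumm, htot⟩ := ih
      set e : ℤ × ℤ ≃ ℤ × ℤ :=
        ⟨fun x => (x.1 - x.2, x.2), fun x => (x.1 + x.2, x.2),
          fun x => by simp, fun x => by simp⟩ with he
      have h1 : Summable (fun x : ℤ × ℤ => p x.1 * P n x.2) :=
        hsummable.mul_of_nonneg hsumm (fun k => hpos k) (fun k => hnn k)
      have hF : Summable (fun x : ℤ × ℤ => p (x.1 - x.2) * P n x.2) := by
        have := (Equiv.summable_iff e (f := fun x : ℤ × ℤ => p x.1 * P n x.2)).mpr h1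
        exact this.congr (fun x => rfl)
      have hkey := (summable_prod_of_nonneg
        (fun x => mul_nonneg (hpos _) (hnn _))).mp hF
      refine ⟨fun k => by
          rw [hPrec]; exact tsum_nonneg fun l => mul_nonneg (hpos _) (hnn _), ?_, ?_⟩
      · exact hkey.2.congr (fun k => (hPrec n k).symm)
      · rw [tsum_congr (hPrec n), ← Summable.tsum_prod' hF hkey.1]
        have hre : ∑' x : ℤ × ℤ, p (x.1 - x.2) * P n x.2
            = ∑' x : ℤ × ℤ, p x.1 * P n x.2 :=
          Equiv.tsum_eq e (fun y : ℤ × ℤ => p y.1 * P n y.2)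
        rw [hre, Summable.tsum_prod' h1 (fun m => (hsumm.mul_left (p m)))]
        calc ∑' m : ℤ, ∑' l : ℤ, p m * P n l = ∑' m : ℤ, p m * ∑' l, P n l :=
              tsum_congr fun m => tsum_mul_left
          _ = 1 := by rw [htot]; simp [hsum]
  -- Fourier representation
  have hFour : ∀ n (k : ℤ), (P n k : ℂ) = (1 / (2 * (π : ℂ))) *
      ∫ t in Set.Ioc (-π) π, phiC p t ^ n * Complex.exp (-(k : ℂ) * t * Complex.I) := by
    intro n
    induction n with
    | zero =>
      intro k
      have hcast : ∀ t : ℝ, phiC p t ^ 0 * Complex.exp (-(k : ℂ) * t * Complex.I)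
          = Complex.exp (((-k : ℤ) : ℂ) * t * Complex.I) := by
        intro t; rw [pow_zero, one_mul]; congr 1; push_cast; ring
      rw [hP0]
      simp_rw [hcast]
      rw [integral_char (-k)]
      have hπ : (π : ℂ) ≠ 0 := Complex.ofReal_ne_zero.mpr Real.pi_ne_zero
      split_ifs with h1 h2 h2
      · push_cast
        field_simp
      · exact absurd (by rw [h1, neg_zero]) h2
      · exact absurd (neg_eq_zero.mp h2) h1
      · simp
    | succ n ih =>
      intro k
      obtain ⟨hnn, hsumm, htot⟩ := hInv n
      have h1 : (P (n+1) k : ℂ) = ∑' l : ℤ, (p (k - l) : ℂ) * (P n l : ℂ) := by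
        rw [hPrec, Complex.ofReal_tsum]
        push_cast
        rfl
      have hps : Summable (fun l : ℤ => p (k - l)) :=
        (Equiv.subLeft k).summable_iff.mpr hsummable
      have hstep1 : (P (n+1) k : ℂ) = (1 / (2 * (π : ℂ))) *
          ∑' l : ℤ, ∫ t in Set.Ioc (-π) π, gC p n k l t := by
        rw [h1]
        calc ∑' l : ℤ, (p (k - l) : ℂ) * (P n l : ℂ)
            = ∑' l : ℤ, (1 / (2 * (π : ℂ))) * ∫ t in Set.Ioc (-π) π, gC p n k l t := by
              refine tsum_congr fun l => ?_
              rw [ih l]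
              have hint : (∫ t in Set.Ioc (-π) π, gC p n k l t)
                  = (p (k - l) : ℂ) * ∫ t in Set.Ioc (-π) π,
                      phiC p t ^ n * Complex.exp (-(l : ℂ) * t * Complex.I) := by
                simp only [gC]
                exact integral_const_mul _ _
              rw [hint]
              ring
          _ = (1 / (2 * (π : ℂ))) * ∑' l : ℤ, ∫ t in Set.Ioc (-π) π, gC p n k l t :=
              tsum_mul_left
      have hswap : ∑' l : ℤ, ∫ t in Set.Ioc (-π) π, gC p n k l t
          = ∫ t in Set.Ioc (-π) π, ∑' l : ℤ, gC p n k l t := by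
        rw [← MeasureTheory.integral_tsum]
        · intro l
          apply Continuous.aestronglyMeasurable
          exact continuous_const.mul (((phi_continuous p hpos hsummable).pow n).mul
            (Complex.continuous_exp.comp (by continuity)))
        · have hb : ∀ l : ℤ, (∫⁻ t, ‖gC p n k l t‖₊ ∂(volume.restrict (Set.Ioc (-π) π)))
              ≤ (‖p (k - l)‖₊ : ENNReal) * ENNReal.ofReal (2 * π) := by
            intro l
            have hbd : ∀ t : ℝ, ‖gC p n k l t‖₊ ≤ ‖p (k - l)‖₊ := by
              intro t
              rw [← NNReal.coe_le_coe]
              simp only [coe_nnnorm]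
              simp only [gC]
              rw [norm_mul, norm_mul, norm_pow]
              have he1 : ‖Complex.exp (-(l : ℂ) * t * Complex.I)‖ = 1 := by
                rw [show (-(l : ℂ) * t * Complex.I) = (((-l * t : ℝ)) : ℂ) * Complex.I by
                  push_cast; ring, Complex.norm_exp_ofReal_mul_I]
              rw [he1, mul_one]
              calc ‖((p (k - l) : ℝ) : ℂ)‖ * ‖phiC p t‖ ^ n
                  ≤ ‖((p (k - l) : ℝ) : ℂ)‖ * 1 := by
                    gcongr
                    exact pow_le_one₀ (norm_nonneg _)
                      (phi_norm_le p hpos hsummable hsum t)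
                _ = ‖p (k - l)‖ := by rw [mul_one, Complex.norm_real]
            calc (∫⁻ t, ‖gC p n k l t‖₊ ∂(volume.restrict (Set.Ioc (-π) π)))
                ≤ ∫⁻ _, (‖p (k - l)‖₊ : ENNReal) ∂(volume.restrict (Set.Ioc (-π) π)) := by
                  apply lintegral_mono
                  intro t
                  exact ENNReal.coe_le_coe.mpr (hbd t)
              _ = (‖p (k - l)‖₊ : ENNReal) * ENNReal.ofReal (2 * π) := by
                  rw [MeasureTheory.lintegral_const, Measure.restrict_apply_univ,
                    Real.volume_Ioc]
                  congr 1
                  rw [sub_neg_eq_add]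
                  ring_nf
          apply ne_of_lt
          calc ∑' l : ℤ, ∫⁻ t, ‖gC p n k l t‖₊ ∂(volume.restrict (Set.Ioc (-π) π))
              ≤ ∑' l : ℤ, (‖p (k - l)‖₊ : ENNReal) * ENNReal.ofReal (2 * π) :=
                ENNReal.tsum_le_tsum hb
            _ = (∑' l : ℤ, (‖p (k - l)‖₊ : ENNReal)) * ENNReal.ofReal (2 * π) :=
                ENNReal.tsum_mul_right
            _ < ⊤ := by
                apply ENNReal.mul_lt_top _ ENNReal.ofReal_lt_top
                rw [lt_top_iff_ne_top, ENNReal.tsum_coe_ne_top_iff_summable]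
                rw [← NNReal.summable_coe]
                apply Summable.congr hps.abs
                intro l
                rw [coe_nnnorm, Real.norm_eq_abs]
      have hpt : ∀ t : ℝ, ∑' l : ℤ, gC p n k l t
          = phiC p t ^ (n+1) * Complex.exp (-(k : ℂ) * t * Complex.I) := by
        intro t
        have he2 : ∀ l : ℤ, Complex.exp (-(l : ℂ) * t * Complex.I) =
            Complex.exp (-(k : ℂ) * t * Complex.I) *
              Complex.exp (((k - l : ℤ) : ℂ) * t * Complex.I) := by
          intro l; rw [← Complex.exp_add]; congr 1; push_cast; ring
        calc ∑' l : ℤ, gC p n k l t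
            = ∑' l : ℤ, (phiC p t ^ n * Complex.exp (-(k : ℂ) * t * Complex.I)) *
                ((p (k - l) : ℂ) * Complex.exp (((k - l : ℤ) : ℂ) * t * Complex.I)) := by
              refine tsum_congr fun l => ?_
              simp only [gC]; rw [he2 l]; ring
          _ = (phiC p t ^ n * Complex.exp (-(k : ℂ) * t * Complex.I)) *
              ∑' l : ℤ, ((p (k - l) : ℂ) *
                Complex.exp (((k - l : ℤ) : ℂ) * t * Complex.I)) := tsum_mul_left
          _ = (phiC p t ^ n * Complex.exp (-(k : ℂ) * t * Complex.I)) * phiC p t := by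
              congr 1
              have := Equiv.tsum_eq (Equiv.subLeft k)
                (fun m : ℤ => (p m : ℂ) * Complex.exp ((m : ℂ) * t * Complex.I))
              rw [phiC, ← this]
              rfl
          _ = phiC p t ^ (n+1) * Complex.exp (-(k : ℂ) * t * Complex.I) := by ring
      rw [hstep1, hswap]
      congr 1
      exact MeasureTheory.integral_congr_ae (Filter.Eventually.of_forall hpt)
  -- uniform bound on P
  have hBound : ∀ (n : ℕ) (k : ℤ),
      |P n k| ≤ (1/(2*π)) * ∫ t in Set.Ioc (-π) π, ‖phiC p t‖ ^ n := by
    intro n k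
    have h0 : |P n k| = ‖(P n k : ℂ)‖ := by rw [Complex.norm_real, Real.norm_eq_abs]
    rw [h0, hFour n k, norm_mul]
    have hc : ‖(1 / (2 * (π : ℂ)))‖ = 1/(2*π) := by
      rw [norm_div, norm_one, norm_mul, Complex.norm_real, Real.norm_eq_abs,
        _root_.abs_of_nonneg Real.pi_pos.le]
      norm_num
    rw [hc]
    gcongr
    refine (norm_integral_le_integral_norm _).trans_eq ?_
    refine MeasureTheory.integral_congr_ae (Filter.Eventually.of_forall fun t => ?_)
    show ‖phiC p t ^ n * Complex.exp (-(k : ℂ) * t * Complex.I)‖ = ‖phiC p t‖ ^ n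
    rw [norm_mul, norm_pow]
    have he1 : ‖Complex.exp (-(k : ℂ) * t * Complex.I)‖ = 1 := by
      rw [show (-(k : ℂ) * t * Complex.I) = (((-k * t : ℝ)) : ℂ) * Complex.I by
        push_cast; ring, Complex.norm_exp_ofReal_mul_I]
    rw [he1, mul_one]
  -- assembly
  intro ε hε
  have hT := integral_pow_tendsto p hpos hsummable hsum hab hpa hpb
  have hev : ∀ᶠ n in atTop, (∫ t in Set.Ioc (-π) π, ‖phiC p t‖ ^ n) < π * ε :=
    hT.eventually (gt_mem_nhds (by positivity))
  obtain ⟨N1, hN1⟩ := eventually_atTop.mp hev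
  obtain ⟨M, hM⟩ := exists_nat_gt ((2/ε)^2 / (2*π*v))
  refine ⟨max N1 (M+1), fun n hn k => ?_⟩
  have hn1 : N1 ≤ n := le_trans (le_max_left _ _) hn
  have hn2 : M + 1 ≤ n := le_trans (le_max_right _ _) hn
  have hPn : |P n k| < ε/2 := by
    calc |P n k| ≤ (1/(2*π)) * ∫ t in Set.Ioc (-π) π, ‖phiC p t‖ ^ n := hBound n k
      _ < (1/(2*π)) * (π * ε) := by
          apply mul_lt_mul_of_pos_left (hN1 n hn1)
          positivity
      _ = ε/2 := by
          field_simp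
  set G : ℝ := (1 / Real.sqrt (2 * π * v * n)) *
      Real.exp (-((k : ℝ) - σ₁ * n)^2 / (2 * v * n)) with hGdef
  have hnpos : (0:ℝ) < n := by
    have : (1:ℕ) ≤ n := le_trans (Nat.le_add_left 1 M) hn2
    exact_mod_cast lt_of_lt_of_le zero_lt_one (by exact_mod_cast this)
  have hprod : (0:ℝ) < 2*π*v*n := by positivity
  have hGnn : 0 ≤ G := by
    rw [hGdef]
    positivity
  have hGlt : G < ε/2 := by
    have hsq : (2/ε)^2 < 2*π*v*n := by
      have h1 : (2/ε)^2 / (2*π*v) < M := hM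
      have h2 : (M:ℝ) < n := by exact_mod_cast lt_of_lt_of_le (Nat.lt_succ_self M) hn2
      have h3 : (0:ℝ) < 2*π*v := by positivity
      calc (2/ε)^2 = ((2/ε)^2 / (2*π*v)) * (2*π*v) := by field_simp
        _ < (M:ℝ) * (2*π*v) := by exact mul_lt_mul_of_pos_right h1 h3
        _ ≤ (n:ℝ) * (2*π*v) := by nlinarith
        _ = 2*π*v*n := by ring
    have hlt : 2/ε < Real.sqrt (2*π*v*n) :=
      (Real.lt_sqrt (by positivity)).mpr hsq
    have hsqpos : 0 < Real.sqrt (2*π*v*n) := lt_trans (by positivity) hlt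
    have hG1 : G ≤ 1 / Real.sqrt (2*π*v*n) := by
      rw [hGdef]
      calc (1 / Real.sqrt (2 * π * v * n)) *
          Real.exp (-((k : ℝ) - σ₁ * n)^2 / (2 * v * n))
          ≤ (1 / Real.sqrt (2 * π * v * n)) * 1 := by
            gcongr
            rw [Real.exp_le_one_iff]
            apply div_nonpos_of_nonpos_of_nonneg
            · simp [sq_nonneg]
            · positivity
        _ = 1 / Real.sqrt (2*π*v*n) := mul_one _
    have : 1 / Real.sqrt (2*π*v*n) < 1 / (2/ε) :=
      one_div_lt_one_div_of_lt (by positivity) hlt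
    rw [one_div_div] at this
    linarith
  have habs : |P n k - G| ≤ |P n k| + |G| := by
    have := abs_add_le (P n k) (-G)
    rwa [← sub_eq_add_neg, abs_neg] at this
  calc |P n k - G| ≤ |P n k| + |G| := habs
    _ = |P n k| + G := by rw [_root_.abs_of_nonneg hGnn]
    _ < ε/2 + ε/2 := by linarith
    _ = ε := by ring
end

section
/- Let p be a nonnegative integer and 0 < ξ < 1/2. Let f : [−1/2, 1/2] → ℝ be the odd piecewise linear function with f(0) = 0, f(ξ) = p + 1/2, f(1/2) = 1/2, affine on [0, ξ] and on [ξ, 1/2], and f(−x) = −f(x). Then (1/2) ∫_{−1/2}^{1/2} f(x)² dx − 1/24 = (p + 1)(2p + 1 − 2ξ)/12. -/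
open intervalIntegral in
lemma poly_int (a b c d : ℝ) :
    ∫ x in a..b, (c*x+d)^2 =
      (b-a)*((c*a+d)^2+(c*a+d)*(c*b+d)+(c*b+d)^2)/3 := by
  have h : (fun x : ℝ => (c*x+d)^2) = fun x => c^2*x^2 + (2*c*d)*x + d^2 := by
    funext x; ring
  rw [h]
  rw [integral_add (f := fun x => c^2*x^2 + 2*c*d*x) (g := fun _ => d^2) (((continuous_const.mul (continuous_pow 2)).add
        (continuous_const.mul continuous_id')).intervalIntegrable _ _)
      (continuous_const.intervalIntegrable _ _),
    integral_add (f := fun x => c^2*x^2) (g := fun x => 2*c*d*x) ((continuous_const.mul (continuous_pow 2)).intervalIntegrable _ _)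
      ((continuous_const.mul continuous_id').intervalIntegrable _ _)]
  simp [integral_pow, integral_const_mul, integral_const, mul_comm]
  ring

/-- Diffusion coefficient of the zig-zag map: for the odd piecewise linear map `f` on
`[-1/2, 1/2]` with `f(0) = 0`, `f(ξ) = p + 1/2`, `f(1/2) = 1/2`, affine on `[0, ξ]` and on
`[ξ, 1/2]`, one has `(1/2)∫_{-1/2}^{1/2} f² - 1/24 = (p+1)(2p+1-2ξ)/12`. -/
theorem zigzag_diffusion_coefficient
    (p : ℕ) (ξ : ℝ) (hξ0 : 0 < ξ) (hξ : ξ < 1/2)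
    (f : ℝ → ℝ)
    (hodd : ∀ x ∈ Set.Icc (-(1/2) : ℝ) (1/2), f (-x) = -f x)
    (h0 : f 0 = 0) (hξval : f ξ = (p : ℝ) + 1/2) (hhalf : f (1/2) = 1/2)
    (haff1 : ∃ c d : ℝ, ∀ x ∈ Set.Icc (0 : ℝ) ξ, f x = c * x + d)
    (haff2 : ∃ c d : ℝ, ∀ x ∈ Set.Icc ξ (1/2 : ℝ), f x = c * x + d) :
    (1/2 : ℝ) * (∫ x in (-(1/2) : ℝ)..(1/2 : ℝ), (f x)^2) - 1/24 =
      ((p : ℝ) + 1) * (2 * (p : ℝ) + 1 - 2 * ξ) / 12 := by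
  obtain ⟨c1, d1, h1⟩ := haff1
  obtain ⟨c2, d2, h2⟩ := haff2
  have hξle : ξ ≤ 1/2 := hξ.le
  -- equalities on the subintervals
  have E1 : Set.EqOn (fun x => (f x)^2) (fun x => (c1*x+d1)^2) (Set.uIcc 0 ξ) := by
    intro x hx
    rw [Set.uIcc_of_le hξ0.le] at hx
    simp only [h1 x hx]
  have E2 : Set.EqOn (fun x => (f x)^2) (fun x => (c2*x+d2)^2) (Set.uIcc ξ (1/2:ℝ)) := by
    intro x hx
    rw [Set.uIcc_of_le hξle] at hx
    simp only [h2 x hx]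
  -- integrability
  have cont1 : Continuous (fun x : ℝ => (c1*x+d1)^2) := by fun_prop
  have cont2 : Continuous (fun x : ℝ => (c2*x+d2)^2) := by fun_prop
  have int1 : IntervalIntegrable (fun x => (f x)^2) MeasureTheory.volume 0 ξ := by
    refine (cont1.intervalIntegrable 0 ξ).congr ?_
    intro x hx
    exact (E1 (Set.uIoc_subset_uIcc hx)).symm
  have int2 : IntervalIntegrable (fun x => (f x)^2) MeasureTheory.volume ξ (1/2) := by
    refine (cont2.intervalIntegrable ξ (1/2)).congr ?_
    intro x hx
    exact (E2 (Set.uIoc_subset_uIcc hx)).symm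
  have intpos : IntervalIntegrable (fun x => (f x)^2) MeasureTheory.volume 0 (1/2) :=
    int1.trans int2
  -- negative half equals positive half
  have Eneg : Set.EqOn (fun x => (f x)^2) (fun x => (f (-x))^2)
      (Set.uIcc (-(1/2):ℝ) 0) := by
    intro x hx
    rw [Set.uIcc_of_le (by norm_num : (-(1/2):ℝ) ≤ 0)] at hx
    have hx' : x ∈ Set.Icc (-(1/2):ℝ) (1/2) := ⟨hx.1, hx.2.trans (by norm_num)⟩
    simp only [hodd x hx', neg_sq]
  have hneg : ∫ x in (-(1/2):ℝ)..(0:ℝ), (f x)^2 = ∫ x in (0:ℝ)..(1/2:ℝ), (f x)^2 := by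
    rw [intervalIntegral.integral_congr Eneg]
    rw [intervalIntegral.integral_comp_neg (fun x => (f x)^2)]
    norm_num
  have intneg : IntervalIntegrable (fun x => (f x)^2) MeasureTheory.volume (-(1/2)) 0 := by
    have h' : IntervalIntegrable (fun x => (f (-x))^2) MeasureTheory.volume (-(1/2)) 0 := by
      have := ((IntervalIntegrable.iff_comp_neg (by simp)).mp intpos).symm
      simpa using this
    refine h'.congr ?_
    intro x hx
    exact (Eneg (Set.uIoc_subset_uIcc hx)).symm
  -- split the integral
  have split : ∫ x in (-(1/2):ℝ)..(1/2:ℝ), (f x)^2 =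
      (∫ x in (-(1/2):ℝ)..(0:ℝ), (f x)^2) + ∫ x in (0:ℝ)..(1/2:ℝ), (f x)^2 :=
    (intervalIntegral.integral_add_adjacent_intervals intneg intpos).symm
  have split2 : ∫ x in (0:ℝ)..(1/2:ℝ), (f x)^2 =
      (∫ x in (0:ℝ)..ξ, (f x)^2) + ∫ x in ξ..(1/2:ℝ), (f x)^2 :=
    (intervalIntegral.integral_add_adjacent_intervals int1 int2).symm
  -- endpoint values
  have hA0 : c1 * 0 + d1 = 0 := by
    have := h1 0 ⟨le_refl 0, hξ0.le⟩; rw [h0] at this; linarith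
  have hA1 : c1 * ξ + d1 = (p:ℝ) + 1/2 := by
    have := h1 ξ ⟨hξ0.le, le_refl ξ⟩; rw [hξval] at this; linarith
  have hB1 : c2 * ξ + d2 = (p:ℝ) + 1/2 := by
    have := h2 ξ ⟨le_refl ξ, hξle⟩; rw [hξval] at this; linarith
  have hB2 : c2 * (1/2) + d2 = 1/2 := by
    have := h2 (1/2) ⟨hξle, le_refl _⟩; rw [hhalf] at this; linarith
  -- compute pieces
  have P1 : ∫ x in (0:ℝ)..ξ, (f x)^2 = (ξ-0)*(0^2+0*((p:ℝ)+1/2)+((p:ℝ)+1/2)^2)/3 := by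
    rw [intervalIntegral.integral_congr E1, poly_int, hA0, hA1]
  have P2 : ∫ x in ξ..(1/2:ℝ), (f x)^2 =
      ((1/2:ℝ)-ξ)*(((p:ℝ)+1/2)^2+((p:ℝ)+1/2)*(1/2)+(1/2:ℝ)^2)/3 := by
    rw [intervalIntegral.integral_congr E2, poly_int, hB1, hB2]
  rw [split, hneg, split2, P1, P2]
  ring
end

section
/- Let s ≥ 1 be an integer and Λ = 2s. (i) For every real λ with sin(λ/2) ≠ 0: sin(sλ/2)·cos((s−1)λ/2) / (s·sin(λ/2)) = (1/s)·(1 + Σ_{j=1}^{s−1} cos(jλ)). (ii) The function z(λ) = (1/s)(1 + Σ_{j=1}^{s−1} cos(jλ)) satisfies z(0) = 1, z′(0) = 0, and −(1/2)·z″(0) = (Λ − 1)(Λ − 2)/24. Hence the deterministic diffusion coefficient of the LDS generated by f(x) = Λx with even Λ equals D = (Λ − 1)(Λ − 2)/24. -/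
open Real Finset

lemma trig_key : ∀ (s : ℕ), 1 ≤ s → ∀ x : ℝ,
    Real.sin ((s : ℝ) * x) * Real.cos (((s : ℝ) - 1) * x) =
      Real.sin x * (1 + ∑ j ∈ Finset.Icc 1 (s - 1), Real.cos (2 * (j : ℝ) * x)) := by
  intro s hs
  induction s, hs using Nat.le_induction with
  | base => intro x; simp
  | succ n hn ih =>
    intro x
    obtain ⟨m, rfl⟩ : ∃ m, n = m + 1 := ⟨n - 1, by omega⟩
    have h1 : m + 1 + 1 - 1 = m + 1 := rfl
    rw [h1, Finset.sum_Icc_succ_top (by omega : 1 ≤ m + 1)]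
    have := ih x
    have h3 : m + 1 - 1 = m := rfl
    rw [h3] at this
    push_cast at this ⊢
    have e1 : ((m : ℝ) + 1 + 1) * x = ((m : ℝ) + 1) * x + x := by ring
    have e2 : ((m : ℝ) + 1 + 1 - 1) * x = ((m : ℝ) + 1) * x := by ring
    have e3 : ((m : ℝ) + 1 - 1) * x = ((m : ℝ) + 1) * x - x := by ring
    have e4 : 2 * ((m : ℝ) + 1) * x = ((m : ℝ) + 1) * x + ((m : ℝ) + 1) * x := by ring
    rw [e1, e2, e4, Real.sin_add, Real.cos_add]
    rw [e3, Real.cos_sub] at this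
    nlinarith [this, Real.sin_sq_add_cos_sq (((m:ℝ)+1)*x), Real.sin_sq_add_cos_sq x]

lemma sq_sum_icc : ∀ m : ℕ, ∑ j ∈ Finset.Icc 1 m, (j : ℝ) ^ 2
    = (m : ℝ) * ((m : ℝ) + 1) * (2 * (m : ℝ) + 1) / 6 := by
  intro m
  induction m with
  | zero => simp
  | succ n ih =>
    rw [Finset.sum_Icc_succ_top (by omega), ih]
    push_cast
    ring

/-- For the LDS generated by `f(x) = Λx` with even slope `Λ = 2s`: (i) the trace of the
Fourier-transformed transition matrix equals
`sin(sλ/2)cos((s-1)λ/2)/(s sin(λ/2)) = (1/s)(1 + Σ_{j=1}^{s-1} cos(jλ))`; (ii) this function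
`z` satisfies `z(0) = 1`, `z'(0) = 0` and `-(1/2) z''(0) = (Λ-1)(Λ-2)/24`, which is the
deterministic diffusion coefficient for even `Λ`. -/
theorem diffusion_coefficient_even_slope
    (s : ℕ) (hs : 1 ≤ s) (Λ : ℝ) (hΛ : Λ = 2 * (s : ℝ))
    (z : ℝ → ℝ)
    (hz : ∀ lam : ℝ, z lam = (1 / (s : ℝ)) *
      (1 + ∑ j ∈ Finset.Icc 1 (s - 1), Real.cos ((j : ℝ) * lam))) :
    (∀ lam : ℝ, Real.sin (lam / 2) ≠ 0 →
      Real.sin ((s : ℝ) * lam / 2) * Real.cos (((s : ℝ) - 1) * lam / 2) /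
        ((s : ℝ) * Real.sin (lam / 2)) = z lam) ∧
    z 0 = 1 ∧
    deriv z 0 = 0 ∧
    -(1/2 : ℝ) * deriv (deriv z) 0 = (Λ - 1) * (Λ - 2) / 24 := by
  have hs0 : (s : ℝ) ≠ 0 := by positivity
  -- replace z by explicit function
  have hzfun : z = fun lam => (1 / (s : ℝ)) *
      (1 + ∑ j ∈ Finset.Icc 1 (s - 1), Real.cos ((j : ℝ) * lam)) := funext hz
  -- first derivative
  have hd1 : ∀ lam : ℝ, HasDerivAt z
      ((1 / (s : ℝ)) * ∑ j ∈ Finset.Icc 1 (s - 1), (-Real.sin ((j : ℝ) * lam) * (j : ℝ))) lam := by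
    intro lam
    rw [hzfun]
    have : HasDerivAt (fun lam : ℝ => 1 + ∑ j ∈ Finset.Icc 1 (s - 1), Real.cos ((j : ℝ) * lam))
        (∑ j ∈ Finset.Icc 1 (s - 1), (-Real.sin ((j : ℝ) * lam) * (j : ℝ))) lam := by
      have : HasDerivAt (fun lam : ℝ => ∑ j ∈ Finset.Icc 1 (s - 1), Real.cos ((j : ℝ) * lam))
          (∑ j ∈ Finset.Icc 1 (s - 1), (-Real.sin ((j : ℝ) * lam) * (j : ℝ))) lam := by
        apply HasDerivAt.fun_sum
        intro j _
        simpa using ((hasDerivAt_id lam).const_mul (j : ℝ)).cos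
      exact this.const_add 1
    exact this.const_mul (1 / (s : ℝ))
  have hderiv1 : deriv z = fun lam => (1 / (s : ℝ)) *
      ∑ j ∈ Finset.Icc 1 (s - 1), (-Real.sin ((j : ℝ) * lam) * (j : ℝ)) :=
    funext fun lam => (hd1 lam).deriv
  -- second derivative
  have hd2 : ∀ lam : ℝ, HasDerivAt (deriv z)
      ((1 / (s : ℝ)) * ∑ j ∈ Finset.Icc 1 (s - 1),
        (-(Real.cos ((j : ℝ) * lam) * (j : ℝ)) * (j : ℝ))) lam := by
    intro lam
    rw [hderiv1]
    have : HasDerivAt (fun lam : ℝ => ∑ j ∈ Finset.Icc 1 (s - 1),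
        (-Real.sin ((j : ℝ) * lam) * (j : ℝ)))
        (∑ j ∈ Finset.Icc 1 (s - 1), (-(Real.cos ((j : ℝ) * lam) * (j : ℝ)) * (j : ℝ))) lam := by
      apply HasDerivAt.fun_sum
      intro j _
      simpa using (((hasDerivAt_id lam).const_mul (j : ℝ)).sin.neg).mul_const (j : ℝ)
    exact this.const_mul (1 / (s : ℝ))
  refine ⟨?_, ?_, ?_, ?_⟩
  · intro lam hlam
    rw [hz lam]
    have key := trig_key s hs (lam / 2)
    have hrew : ∀ j : ℕ, Real.cos (2 * (j : ℝ) * (lam / 2)) = Real.cos ((j : ℝ) * lam) := by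
      intro j; ring_nf
    simp only [hrew] at key
    have e1 : (s : ℝ) * lam / 2 = (s : ℝ) * (lam / 2) := by ring
    have e2 : ((s : ℝ) - 1) * lam / 2 = ((s : ℝ) - 1) * (lam / 2) := by ring
    rw [e1, e2, key]
    field_simp
  · rw [hz 0]
    have hc : ∑ j ∈ Finset.Icc 1 (s - 1), Real.cos ((j : ℝ) * 0) = (s : ℝ) - 1 := by
      simp [Nat.card_Icc, Nat.cast_sub hs]
    rw [hc]
    field_simp
    ring
  · rw [(hd1 0).deriv]
    simp
  · rw [(hd2 0).deriv]
    simp only [mul_zero, Real.cos_zero, one_mul]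
    have hsum : ∑ j ∈ Finset.Icc 1 (s - 1), (-(j : ℝ) * (j : ℝ))
        = -(((s - 1 : ℕ) : ℝ) * (((s - 1 : ℕ) : ℝ) + 1) * (2 * ((s - 1 : ℕ) : ℝ) + 1) / 6) := by
      rw [← sq_sum_icc (s - 1), ← Finset.sum_neg_distrib]
      apply Finset.sum_congr rfl
      intro j _; ring
    rw [hsum, Nat.cast_sub hs]
    rw [hΛ]
    push_cast
    have h1 : (1 : ℝ) ≤ (s : ℝ) := by exact_mod_cast hs
    field_simp
    ring
end

section
/- Let Λ = 2 + √3 and for λ ∈ ℝ let M(λ) be the 3×3 complex matrix (1/Λ)·[[e^{−iλ}, 1, e^{iλ} + e^{2iλ}], [e^{−iλ}, 1, e^{iλ}], [e^{−iλ} + e^{−2iλ}, 1, e^{iλ}]]. Then for every real λ with cos²λ + 2cos λ ≥ 0, the number z(λ) = (1/Λ)(1 + cos λ + √(cos²λ + 2cos λ)) is an eigenvalue of M(λ), i.e., det(M(λ) − z(λ)·I) = 0. Moreover z(0) = 1, the real function z is twice differentiable at 0, and −(1/2)·z″(0) = √3/6. -/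
open Complex

noncomputable def gfun (l : ℝ) : ℝ := Real.cos l ^ 2 + 2 * Real.cos l

lemma gfun_hasDerivAt (l : ℝ) :
    HasDerivAt gfun (-2 * Real.sin l * Real.cos l - 2 * Real.sin l) l := by
  have h := Real.hasDerivAt_cos l
  have h2 : HasDerivAt gfun (2 * Real.cos l ^ 1 * (-Real.sin l) + 2 * (-Real.sin l)) l :=
    (h.pow 2).add (h.const_mul 2)
  convert h2 using 1; ring

noncomputable def phi (Λ : ℝ) (l : ℝ) : ℝ :=
  (1 / Λ) * (-Real.sin l +
    (-2 * Real.sin l * Real.cos l - 2 * Real.sin l) / (2 * Real.sqrt (gfun l)))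

lemma z_hasDerivAt (Λ : ℝ) (l : ℝ) (hl : gfun l ≠ 0) :
    HasDerivAt (fun x => (1 / Λ) * (1 + Real.cos x + Real.sqrt (gfun x))) (phi Λ l) l := by
  have hsq : HasDerivAt (fun x => Real.sqrt (gfun x))
      ((-2 * Real.sin l * Real.cos l - 2 * Real.sin l) / (2 * Real.sqrt (gfun l))) l :=
    (gfun_hasDerivAt l).sqrt hl
  have h := (((Real.hasDerivAt_cos l).const_add 1).add hsq).const_mul (1 / Λ)
  exact h

lemma gfun_zero : gfun 0 = 3 := by simp [gfun]; norm_num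

lemma phi_hasDerivAt (Λ : ℝ) :
    HasDerivAt (phi Λ)
      ((1 / Λ) * (-1 + ((-4) * (2 * Real.sqrt 3) - 0 * 0) / (2 * Real.sqrt 3) ^ 2)) 0 := by
  have hs3 : Real.sqrt (gfun 0) = Real.sqrt 3 := by rw [gfun_zero]
  have hg0 : gfun 0 ≠ 0 := by rw [gfun_zero]; norm_num
  have hsin := Real.hasDerivAt_sin 0
  have hcos := Real.hasDerivAt_cos 0
  have hn : HasDerivAt (fun l => -2 * Real.sin l * Real.cos l - 2 * Real.sin l) (-4 : ℝ) 0 := by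
    have h1 : HasDerivAt (fun l => -2 * Real.sin l) (-2 * Real.cos 0) 0 := hsin.const_mul (-2)
    have h2 := (h1.mul hcos).sub (hsin.const_mul 2)
    exact h2.congr_deriv (by norm_num)
  have hd : HasDerivAt (fun l => 2 * Real.sqrt (gfun l)) (0 : ℝ) 0 := by
    have := ((gfun_hasDerivAt 0).sqrt hg0).const_mul 2
    exact this.congr_deriv (by simp)
  have hd0 : (2 : ℝ) * Real.sqrt (gfun 0) ≠ 0 := by
    rw [hs3]; positivity
  have hq := hn.div hd hd0
  have := ((hsin.neg.add hq).const_mul (1 / Λ))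
  exact this.congr_deriv (by simp [hs3])

/-- For `Λ = 2 + √3`, the function `z(λ) = (1/Λ)(1 + cos λ + √(cos²λ + 2cos λ))` is an
eigenvalue of the Fourier-transformed transition matrix `M(λ)` whenever `cos²λ + 2cos λ ≥ 0`;
moreover `z(0) = 1`, `z` is twice differentiable at `0`, and the deterministic diffusion
coefficient `-(1/2) z''(0)` equals `√3/6`. -/
theorem diffusion_coefficient_lambda_two_add_sqrt_three
    (Λ : ℝ) (hΛ : Λ = 2 + Real.sqrt 3)
    (M : ℝ → Matrix (Fin 3) (Fin 3) ℂ)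
    (hM : ∀ lam : ℝ, M lam = (1 / (Λ : ℂ)) •
      !![Complex.exp (-I * lam), 1, Complex.exp (I * lam) + Complex.exp (2 * I * lam);
         Complex.exp (-I * lam), 1, Complex.exp (I * lam);
         Complex.exp (-I * lam) + Complex.exp (-2 * I * lam), 1, Complex.exp (I * lam)])
    (z : ℝ → ℝ)
    (hz : ∀ lam : ℝ, z lam = (1 / Λ) *
      (1 + Real.cos lam + Real.sqrt ((Real.cos lam)^2 + 2 * Real.cos lam))) :
    (∀ lam : ℝ, 0 ≤ (Real.cos lam)^2 + 2 * Real.cos lam →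
      Matrix.det (M lam - (z lam : ℂ) • (1 : Matrix (Fin 3) (Fin 3) ℂ)) = 0) ∧
    z 0 = 1 ∧
    DifferentiableAt ℝ z 0 ∧ DifferentiableAt ℝ (deriv z) 0 ∧
    -(1/2 : ℝ) * deriv (deriv z) 0 = Real.sqrt 3 / 6 := by
  have hs3p : (0:ℝ) < Real.sqrt 3 := Real.sqrt_pos.2 (by norm_num)
  have hs3sq : Real.sqrt 3 ^ 2 = 3 := Real.sq_sqrt (by norm_num)
  have hΛ0 : (0:ℝ) < Λ := by rw [hΛ]; positivity
  have hΛne : Λ ≠ 0 := ne_of_gt hΛ0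
  have hzf : z = fun x => (1 / Λ) * (1 + Real.cos x + Real.sqrt (gfun x)) := by
    funext l; rw [hz l]; rfl
  -- eventually gfun > 0 near 0
  have hgc : Continuous gfun := by unfold gfun; continuity
  have hev0 : ∀ᶠ l in nhds (0:ℝ), gfun l ∈ Set.Ioi (0:ℝ) :=
    hgc.continuousAt (Ioi_mem_nhds (by rw [gfun_zero]; norm_num))
  have hderiv_eq : deriv z =ᶠ[nhds (0:ℝ)] phi Λ := by
    filter_upwards [hev0] with l hl
    rw [hzf]
    exact (z_hasDerivAt Λ l (ne_of_gt hl)).deriv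
  refine ⟨?_, ?_, ?_, ?_, ?_⟩
  · -- determinant
    intro lam hg
    rw [hM lam, hz lam]
    have hΛc : (Λ : ℂ) ≠ 0 := by exact_mod_cast hΛne
    set e := Complex.exp (I * lam) with he_def
    have he : e ≠ 0 := Complex.exp_ne_zero _
    set c : ℂ := (Real.cos lam : ℂ) with hc_def
    set s : ℂ := (Real.sqrt ((Real.cos lam)^2 + 2 * Real.cos lam) : ℂ) with hs_def
    have h1 : Complex.exp (-I * (lam:ℂ)) = e⁻¹ := by
      rw [he_def, ← Complex.exp_neg]; congr 1; ring
    have h2 : Complex.exp (2 * I * (lam:ℂ)) = e * e := by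
      rw [he_def, ← Complex.exp_add]; congr 1; ring
    have h3 : Complex.exp (-2 * I * (lam:ℂ)) = e⁻¹ * e⁻¹ := by
      rw [he_def]
      simp only [← Complex.exp_neg, ← Complex.exp_add]
      congr 1; ring
    have hcos2 : e ^ 2 + 1 = 2 * c * e := by
      have hcc : c = Complex.cos lam := by rw [hc_def, Complex.ofReal_cos]
      rw [hcc, Complex.cos]
      have ha : Complex.exp ((lam:ℂ) * I) = e := by rw [he_def]; congr 1; ring
      have hb : Complex.exp (-(lam:ℂ) * I) = e⁻¹ := by
        rw [he_def, ← Complex.exp_neg]; congr 1; ring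
      rw [ha, hb]
      field_simp
    have hs2 : s ^ 2 = c ^ 2 + 2 * c := by
      rw [hs_def, hc_def]
      rw [← Complex.ofReal_pow, ← Complex.ofReal_pow]
      push_cast [Real.sq_sqrt hg]
      ring
    have hzc : (((1 / Λ) * (1 + Real.cos lam + Real.sqrt ((Real.cos lam)^2 + 2 * Real.cos lam)) : ℝ) : ℂ)
        = (1 + c + s) / Λ := by
      push_cast [hc_def, hs_def]
      ring
    rw [hzc, Matrix.one_fin_three]
    simp only [h1, h2, h3]
    simp [Matrix.det_fin_three]
    have hef : e * e⁻¹ = 1 := mul_inv_cancel₀ he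
    have hQ : ((e⁻¹ - (1+c+s)) * ((1 - (1+c+s)) * (e - (1+c+s)) - e)
        - (e⁻¹ * (e - (1+c+s)) - e * (e⁻¹ + e⁻¹ * e⁻¹))
        + (e + e * e) * (e⁻¹ - (1 - (1+c+s)) * (e⁻¹ + e⁻¹ * e⁻¹))) = 0 := by
      linear_combination ((1+c+s)^2+(1+c+s)) * e⁻¹ * hcos2 - ((1+c+s)+1) * hs2 +
        (s + 5*c + 6*c*s + 2*c*s^2 + 6*c^2 + 4*c^2*s + 2*c^3 + e⁻¹ + e⁻¹*s + e⁻¹*c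
          - e - 2*e*s - e*s^2 - 2*e*c - 2*e*c*s - e*c^2 + e*e⁻¹*s + e*e⁻¹*c) * hef
    calc _ = ((Λ:ℂ))⁻¹^3 * ((e⁻¹ - (1+c+s)) * ((1 - (1+c+s)) * (e - (1+c+s)) - e)
        - (e⁻¹ * (e - (1+c+s)) - e * (e⁻¹ + e⁻¹ * e⁻¹))
        + (e + e * e) * (e⁻¹ - (1 - (1+c+s)) * (e⁻¹ + e⁻¹ * e⁻¹))) := by ring
      _ = 0 := by rw [hQ, mul_zero]
  · -- z 0 = 1
    rw [hz 0]
    simp only [Real.cos_zero]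
    rw [show (1:ℝ)^2 + 2*1 = 3 by norm_num, hΛ]
    have h23 : (2:ℝ) + Real.sqrt 3 ≠ 0 := by positivity
    field_simp
    ring
  · -- DifferentiableAt z 0
    rw [hzf]
    exact (z_hasDerivAt Λ 0 (by rw [gfun_zero]; norm_num)).differentiableAt
  · -- DifferentiableAt (deriv z) 0
    rw [hderiv_eq.differentiableAt_iff]
    exact (phi_hasDerivAt Λ).differentiableAt
  · -- value of second derivative
    have h2 : deriv (deriv z) 0 = deriv (phi Λ) 0 := hderiv_eq.deriv_eq
    rw [h2, (phi_hasDerivAt Λ).deriv, hΛ]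
    have h23 : (2:ℝ) + Real.sqrt 3 ≠ 0 := by positivity
    field_simp
    ring_nf
    nlinarith [hs3sq, hs3p]
end

section
/- Let Λ = 1 + √3 and for λ ∈ ℝ let M(λ) be the 4×4 complex matrix (1/Λ)·[[0, 1, e^{iλ}, 0], [e^{−iλ}, 1, e^{iλ}, 0], [0, e^{−iλ}, 1, e^{iλ}], [0, e^{−iλ}, 1, 0]]. Then for every real λ with 1 + 2cos λ ≥ 0, the number z(λ) = (1/Λ)(1 + √(1 + 2cos λ)) is an eigenvalue of M(λ), i.e., det(M(λ) − z(λ)·I) = 0. Moreover z(0) = 1, z is twice differentiable at 0, and −(1/2)·z″(0) = (3 − √3)/12. -/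
open Complex

/-- Determinant of a 4×4 matrix given by its entries. -/
lemma det_fin_four_of_aux (a b c d e f g h i j k l m n o p : ℂ) :
    (!![a,b,c,d; e,f,g,h; i,j,k,l; m,n,o,p]).det =
      a*(f*k*p - f*l*o - g*j*p + g*l*n + h*j*o - h*k*n)
      - b*(e*k*p - e*l*o - g*i*p + g*l*m + h*i*o - h*k*m)
      + c*(e*j*p - e*l*n - f*i*p + f*l*m + h*i*n - h*j*m)
      - d*(e*j*o - e*k*n - f*i*o + f*k*m + g*i*n - g*j*m) := by
  rw [Matrix.det_succ_row_zero]
  simp [Fin.sum_univ_succ, Matrix.det_fin_three, Fin.succAbove, Matrix.submatrix_apply]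
  ring

/-- For `Λ = 1 + √3`, the function `z(λ) = (1/Λ)(1 + √(1 + 2cos λ))` is an eigenvalue of the
Fourier-transformed transition matrix `M(λ)` whenever `1 + 2cos λ ≥ 0`; moreover `z(0) = 1`,
`z` is twice differentiable at `0`, and the deterministic diffusion coefficient `-(1/2) z''(0)`
equals `(3 - √3)/12`. -/
theorem diffusion_coefficient_lambda_one_add_sqrt_three
    (Λ : ℝ) (hΛ : Λ = 1 + Real.sqrt 3)
    (M : ℝ → Matrix (Fin 4) (Fin 4) ℂ)
    (hM : ∀ lam : ℝ, M lam = (1 / (Λ : ℂ)) •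
      !![0, 1, Complex.exp (I * lam), 0;
         Complex.exp (-I * lam), 1, Complex.exp (I * lam), 0;
         0, Complex.exp (-I * lam), 1, Complex.exp (I * lam);
         0, Complex.exp (-I * lam), 1, 0])
    (z : ℝ → ℝ)
    (hz : ∀ lam : ℝ, z lam = (1 / Λ) * (1 + Real.sqrt (1 + 2 * Real.cos lam))) :
    (∀ lam : ℝ, 0 ≤ 1 + 2 * Real.cos lam →
      Matrix.det (M lam - (z lam : ℂ) • (1 : Matrix (Fin 4) (Fin 4) ℂ)) = 0) ∧
    z 0 = 1 ∧
    DifferentiableAt ℝ z 0 ∧ DifferentiableAt ℝ (deriv z) 0 ∧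
    -(1/2 : ℝ) * deriv (deriv z) 0 = (3 - Real.sqrt 3) / 12 := by
  have h3 : (0:ℝ) < Real.sqrt 3 := Real.sqrt_pos.mpr (by norm_num)
  have hΛ0 : Λ ≠ 0 := by rw [hΛ]; positivity
  constructor
  · -- determinant part
    intro lam hc
    rw [hM lam]
    set E := Complex.exp (I * lam) with hE
    set F := Complex.exp (-I * lam) with hF
    set s : ℂ := ((Real.sqrt (1 + 2 * Real.cos lam) : ℝ) : ℂ) with hsdef
    set A : ℂ := 1 / (Λ : ℂ) with hA
    set w : ℝ := z lam with hwz
    have hw : w = (1 / Λ) * (1 + Real.sqrt (1 + 2 * Real.cos lam)) := hz lam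
    have hef : E * F = 1 := by
      rw [hE, hF, ← Complex.exp_add]
      norm_num
    have hs : s ^ 2 = 1 + E + F := by
      have h1 : s ^ 2 = ((1 + 2 * Real.cos lam : ℝ) : ℂ) := by
        rw [hsdef]; norm_cast; exact Real.sq_sqrt hc
      have h2 : ((Real.cos lam : ℝ) : ℂ) = (E + F) / 2 := by
        rw [Complex.ofReal_cos, Complex.cos, hE, hF]; ring_nf
      rw [h1, Complex.ofReal_add, Complex.ofReal_mul, Complex.ofReal_one,
        Complex.ofReal_ofNat, h2]
      ring
    have ht : (w : ℂ) = A * (1 + s) := by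
      rw [hw, hA, hsdef]; push_cast; ring
    have hmat : ((A •
        !![0, 1, E, 0; F, 1, E, 0; 0, F, 1, E; 0, F, 1, 0]) -
        (w : ℂ) • (1 : Matrix (Fin 4) (Fin 4) ℂ)) =
        !![-(w:ℂ), A, A*E, 0; A*F, A-w, A*E, 0; 0, A*F, A-w, A*E; 0, A*F, A, -(w:ℂ)] := by
      ext i j
      fin_cases i <;> fin_cases j <;>
        simp [Matrix.one_apply, Matrix.sub_apply, Matrix.smul_apply, smul_eq_mul,
          Matrix.cons_val_zero, Matrix.cons_val_one, Matrix.head_cons, Matrix.vecHead,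
          Matrix.vecTail]
    rw [hmat, det_fin_four_of_aux]
    linear_combination ((w:ℂ)^2 * ((w:ℂ) - A + A*s)) * ht + (A^2*(w:ℂ)^2) * hs +
      (-(A^2*(w:ℂ)^2) - A^3*(w:ℂ)*(E+F) - A^4*E*F) * hef
  -- analytic part
  have hz0 : z 0 = 1 := by
    rw [hz 0, Real.cos_zero]
    norm_num
    rw [hΛ]
    field_simp
  set w : ℝ → ℝ := fun x => (1/Λ) * (-(2 * Real.sin x) / (2 * Real.sqrt (1 + 2 * Real.cos x)))
    with hwdef
  have key : ∀ x : ℝ, 0 < 1 + 2 * Real.cos x → HasDerivAt z (w x) x := by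
    intro x hx
    have h1 : HasDerivAt (fun y => 1 + 2 * Real.cos y) (-(2 * Real.sin x)) x := by
      simpa [mul_comm] using ((Real.hasDerivAt_cos x).const_mul 2).const_add 1
    have h2 : HasDerivAt (fun y => Real.sqrt (1 + 2 * Real.cos y))
        (-(2 * Real.sin x) / (2 * Real.sqrt (1 + 2 * Real.cos x))) x :=
      h1.sqrt (ne_of_gt hx)
    have h4 := (h2.const_add 1).const_mul (1/Λ)
    have hzz : z = fun y => (1/Λ) * (1 + Real.sqrt (1 + 2 * Real.cos y)) := funext hz
    rw [hzz]
    exact h4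
  have hposev : ∀ᶠ x in nhds (0:ℝ), 0 < 1 + 2 * Real.cos x := by
    have hcont : ContinuousAt (fun x : ℝ => 1 + 2 * Real.cos x) 0 := by fun_prop
    have := continuousAt_const.eventually_lt hcont (by norm_num [Real.cos_zero] :
      (0:ℝ) < 1 + 2 * Real.cos 0)
    exact this
  have heq : deriv z =ᶠ[nhds (0:ℝ)] w := by
    filter_upwards [hposev] with x hx using (key x hx).deriv
  have hsqrt3 : Real.sqrt (1 + 2 * Real.cos 0) = Real.sqrt 3 := by
    norm_num [Real.cos_zero]
  have hN : HasDerivAt (fun x : ℝ => -(2 * Real.sin x)) (-2) 0 := by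
    simpa using (((Real.hasDerivAt_sin 0).const_mul 2).fun_neg)
  have hD : HasDerivAt (fun x : ℝ => 2 * Real.sqrt (1 + 2 * Real.cos x)) 0 0 := by
    have h1 : HasDerivAt (fun y : ℝ => 1 + 2 * Real.cos y) (-(2 * Real.sin 0)) 0 := by
      simpa [mul_comm] using ((Real.hasDerivAt_cos 0).const_mul 2).const_add 1
    have h2 := (h1.sqrt (by norm_num [Real.cos_zero])).const_mul 2
    simpa using h2
  have hDne : 2 * Real.sqrt (1 + 2 * Real.cos 0) ≠ 0 := by
    rw [hsqrt3]; positivity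
  have hq := hN.div hD hDne
  have hw2 : HasDerivAt w ((1/Λ) * ((-2 * (2 * Real.sqrt (1 + 2 * Real.cos 0)) -
      -(2 * Real.sin 0) * 0) / (2 * Real.sqrt (1 + 2 * Real.cos 0))^2)) 0 := by
    exact hq.const_mul (1/Λ)
  have h12 : (2 * Real.sqrt 3)^2 = 12 := by
    rw [mul_pow, Real.sq_sqrt (by norm_num : (0:ℝ) ≤ 3)]; norm_num
  have hderivw : deriv w 0 = (1/Λ) * (-(Real.sqrt 3)/3) := by
    rw [hw2.deriv, hsqrt3, Real.sin_zero, h12]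
    congr 1
    have h9 : Real.sqrt 3 * Real.sqrt 3 = 3 := Real.mul_self_sqrt (by norm_num)
    nlinarith [h9]
  refine ⟨hz0, (key 0 (by norm_num [Real.cos_zero])).differentiableAt, ?_, ?_⟩
  · exact hw2.differentiableAt.congr_of_eventuallyEq heq
  · rw [heq.deriv_eq, hderivw, hΛ]
    have h9 : Real.sqrt 3 * Real.sqrt 3 = 3 := Real.mul_self_sqrt (by norm_num)
    have : (1 + Real.sqrt 3) ≠ 0 := by positivity
    field_simp
    nlinarith [h9]
end
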